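/- arXiv:math/0306108 — 5 statements merged into one kernel-verified Lean document; each statement's English description precedes it below -/
import Mathlib

section
/- Let λ₀ > 0, let χ : ℝ → ℝ be smooth with χ(λ) = 0 for λ ≤ λ₀, χ(λ) = 1 for λ ≥ 2λ₀ and 0 ≤ χ ≤ 1, and let φ : ℝ → ℝ be smooth with φ(λ) = 1 for |λ| ≤ 1 and φ(λ) = 0 for |λ| ≥ 2; set χ_L(λ) = χ(λ)φ(λ/L) for L ≥ 1. Then there is a constant C, depending only on χ, φ and λ₀, such that for every integer n ≥ 0, every L ≥ 1, every real t ≠ 0 and every a ∈ ℝ, | ∫_ℝ e^{i(tλ² + aλ)} χ_L(λ²) λ^{-n} dλ | ≤ C (1+n) λ₀^{-n/2} |t|^{-1/2}. -/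
set_option maxHeartbeats 1600000
open MeasureTheory Complex intervalIntegral

noncomputable def ph (t a : ℝ) (x : ℝ) : ℂ := Complex.exp (Complex.I * ((t * x ^ 2 + a * x : ℝ) : ℂ))

lemma norm_ph (t a x : ℝ) : ‖ph t a x‖ = 1 := by
  rw [ph, mul_comm, Complex.norm_exp_ofReal_mul_I]

lemma ph_hasDeriv (t a x : ℝ) :
    HasDerivAt (ph t a) (Complex.I * ((2 * t * x + a : ℝ) : ℂ) * ph t a x) x := by
  have h1 : HasDerivAt (fun x : ℝ => t * x ^ 2 + a * x) (2 * t * x + a) x := by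
    have := ((hasDerivAt_pow 2 x).const_mul t).add ((hasDerivAt_id x).const_mul a)
    show HasDerivAt ((fun y : ℝ => t * y ^ 2) + fun y => a * y) (2 * t * x + a) x
    simpa [mul_comm, mul_assoc, mul_left_comm] using this
  have h2 : HasDerivAt (fun x : ℝ => Complex.I * ((t * x ^ 2 + a * x : ℝ) : ℂ))
      (Complex.I * ((2 * t * x + a : ℝ) : ℂ)) x := by
    exact (h1.ofReal_comp).const_mul Complex.I
  have h3 := h2.cexp
  show HasDerivAt (fun x : ℝ => Complex.exp (Complex.I * ((t * x ^ 2 + a * x : ℝ) : ℂ))) _ x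
  convert h3 using 1
  rw [ph]; ring

lemma cont_ph (t a : ℝ) : Continuous (ph t a) := by
  unfold ph; fun_prop

lemma tail_est (g g' : ℝ → ℝ) (hd : ∀ x, HasDerivAt g (g' x) x) (hg' : Continuous g')
    (t a c δ Mg Ig : ℝ) (ht : 0 < t) (hδ : 0 < δ) (hc : c = -a / (2 * t))
    (hM : ∀ x, |g x| ≤ Mg) (p q : ℝ) (hpq : p ≤ q)
    (hside : δ ≤ p - c ∨ q - c ≤ -δ)
    (hI : ∫ x in p..q, |g' x| ≤ Ig) :
    ‖∫ x in p..q, ph t a x * (g x : ℂ)‖ ≤ (|g p| + |g q| + Ig + Mg) / (2 * t * δ) := by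
  have hgc : Continuous g := by
    rw [continuous_iff_continuousAt]; exact fun x => (hd x).continuousAt
  -- distance from c on the interval
  have hdist : ∀ x ∈ Set.uIcc p q, δ ≤ |x - c| := by
    intro x hx
    rw [Set.uIcc_of_le hpq] at hx
    rcases hside with h | h
    · rw [abs_of_pos (by linarith [hx.1])]; linarith [hx.1]
    · rw [abs_of_neg (by linarith [hx.2])]; linarith [hx.2]
  have hne : ∀ x ∈ Set.uIcc p q, 2 * t * (x - c) ≠ 0 := by
    intro x hx
    have := hdist x hx
    have : x - c ≠ 0 := by
      intro h; rw [h] at this; simp at this; linarith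
    positivity
  set w : ℝ → ℝ := fun x => g x / (2 * t * (x - c)) with hw_def
  set w' : ℝ → ℝ := fun x =>
    (g' x * (2 * t * (x - c)) - g x * (2 * t)) / (2 * t * (x - c)) ^ 2 with hw'_def
  have hw : ∀ x ∈ Set.uIcc p q, HasDerivAt w (w' x) x := by
    intro x hx
    have hden : HasDerivAt (fun x : ℝ => 2 * t * (x - c)) (2 * t) x := by
      simpa using ((hasDerivAt_id x).sub_const c).const_mul (2 * t)
    exact (hd x).div hden (hne x hx)
  have hu : ∀ x ∈ Set.uIcc p q, HasDerivAt (fun x => ((w x : ℝ) : ℂ)) ((w' x : ℝ) : ℂ) x :=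
    fun x hx => (hw x hx).ofReal_comp
  have hv : ∀ x ∈ Set.uIcc p q,
      HasDerivAt (ph t a) (Complex.I * ((2 * t * x + a : ℝ) : ℂ) * ph t a x) x :=
    fun x _ => ph_hasDeriv t a x
  have hwcont : ContinuousOn w' (Set.uIcc p q) := by
    apply ContinuousOn.div
    · exact ((hg'.continuousOn.mul (by fun_prop)).sub (by fun_prop))
    · fun_prop
    · intro x hx; exact pow_ne_zero 2 (hne x hx)
  have hu' : IntervalIntegrable (fun x => ((w' x : ℝ) : ℂ)) volume p q :=
    (Complex.continuous_ofReal.comp_continuousOn hwcont).intervalIntegrable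
  have hv' : IntervalIntegrable (fun x => Complex.I * ((2 * t * x + a : ℝ) : ℂ) * ph t a x)
      volume p q := by
    apply Continuous.intervalIntegrable
    exact (continuous_const.mul (by fun_prop)).mul (cont_ph t a)
  have ibp := integral_mul_deriv_eq_deriv_mul hu hv hu' hv'
  -- identify u * v' with I * (ph * g)
  have hkey : ∀ x ∈ Set.uIcc p q,
      ((w x : ℝ) : ℂ) * (Complex.I * ((2 * t * x + a : ℝ) : ℂ) * ph t a x)
        = Complex.I * (ph t a x * (g x : ℂ)) := by
    intro x hx
    have h2 : (2 * t * x + a) = 2 * t * (x - c) := by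
      rw [hc]; field_simp; ring
    have h3 : w x * (2 * t * x + a) = g x := by
      rw [h2, hw_def]; exact div_mul_cancel₀ _ (hne x hx)
    calc ((w x : ℝ) : ℂ) * (Complex.I * ((2 * t * x + a : ℝ) : ℂ) * ph t a x)
        = Complex.I * (ph t a x * (((w x * (2 * t * x + a) : ℝ)) : ℂ)) := by push_cast; ring
      _ = _ := by rw [h3]
  have hEq : (∫ x in p..q, Complex.I * (ph t a x * (g x : ℂ)))
      = ((w q : ℝ) : ℂ) * ph t a q - ((w p : ℝ) : ℂ) * ph t a p
        - ∫ x in p..q, ((w' x : ℝ) : ℂ) * ph t a x := by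
    rw [← ibp]; exact integral_congr fun x hx => (hkey x hx).symm
  have hpull : (∫ x in p..q, Complex.I * (ph t a x * (g x : ℂ)))
      = Complex.I * ∫ x in p..q, ph t a x * (g x : ℂ) := integral_const_mul _ _
  have hnorm_eq : ‖∫ x in p..q, ph t a x * (g x : ℂ)‖
      = ‖((w q : ℝ) : ℂ) * ph t a q - ((w p : ℝ) : ℂ) * ph t a p
        - ∫ x in p..q, ((w' x : ℝ) : ℂ) * ph t a x‖ := by
    rw [← hEq, hpull, norm_mul, Complex.norm_I, one_mul]
  rw [hnorm_eq]
  have hbd : ∀ x, δ ≤ |x - c| → |w x| ≤ |g x| / (2 * t * δ) := by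
    intro x hx
    have h1 : 2 * t * δ ≤ |2 * t * (x - c)| := by
      rw [abs_mul, abs_of_pos (show (0:ℝ) < 2 * t by linarith)]
      nlinarith
    rw [hw_def]
    simp only
    rw [abs_div]
    exact div_le_div_of_nonneg_left (abs_nonneg _) (by positivity) h1
  have hMg : 0 ≤ Mg := le_trans (abs_nonneg _) (hM 0)
  set Gf : ℝ → ℝ := fun x => |g' x| * (2 * t * δ)⁻¹ + (Mg / (2 * t)) * ((x - c) ^ 2)⁻¹
    with hGf_def
  have hW : ∀ x ∈ Set.uIcc p q, |w' x| ≤ Gf x := by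
    intro x hx
    have hD := hdist x hx
    have hDpos : (0:ℝ) < |x - c| := lt_of_lt_of_le hδ hD
    have hxc : x - c ≠ 0 := by
      intro h; rw [h] at hDpos; simp at hDpos
    have habs : |(2 * t * (x - c)) ^ 2| = (2 * t) ^ 2 * |x - c| ^ 2 := by
      rw [_root_.abs_of_nonneg (sq_nonneg (2 * t * (x - c)))]
      rw [_root_.sq_abs]
      ring
    have hnum : |g' x * (2 * t * (x - c)) - g x * (2 * t)|
        ≤ |g' x| * (2 * t * |x - c|) + Mg * (2 * t) := by
      have h2t : (0:ℝ) < 2 * t := by linarith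
      have h1 : |g' x * (2 * t * (x - c)) - g x * (2 * t)|
          ≤ |g' x| * |2 * t * (x - c)| + |g x| * |2 * t| := by
        refine le_trans (abs_sub _ _) ?_
        simp [abs_mul]
      have h2 : |2 * t * (x - c)| = 2 * t * |x - c| := by
        rw [abs_mul, abs_of_pos h2t]
      have h3 : |2 * t| = 2 * t := abs_of_pos h2t
      rw [h2, h3] at h1
      have h4 : |g x| * (2 * t) ≤ Mg * (2 * t) := mul_le_mul_of_nonneg_right (hM x) h2t.le
      linarith
    have hstepD : ∀ D : ℝ, 0 < D →
        (|g' x| * (2 * t * D) + Mg * (2 * t)) / ((2 * t) ^ 2 * D ^ 2)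
        = |g' x| * (2 * t * D)⁻¹ + (Mg / (2 * t)) * (D ^ 2)⁻¹ := by
      intro D hD
      field_simp
    have hstep := hstepD _ hDpos
    rw [hw'_def]
    simp only
    rw [abs_div, habs]
    calc |g' x * (2 * t * (x - c)) - g x * (2 * t)| / ((2 * t) ^ 2 * |x - c| ^ 2)
        ≤ (|g' x| * (2 * t * |x - c|) + Mg * (2 * t)) / ((2 * t) ^ 2 * |x - c| ^ 2) := by
          gcongr
      _ = |g' x| * (2 * t * |x - c|)⁻¹ + (Mg / (2 * t)) * (|x - c| ^ 2)⁻¹ := hstep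
      _ ≤ Gf x := by
          rw [hGf_def]
          simp only
          rw [← _root_.sq_abs (x - c)]
          have : |g' x| * (2 * t * |x - c|)⁻¹ ≤ |g' x| * (2 * t * δ)⁻¹ := by
            apply mul_le_mul_of_nonneg_left _ (abs_nonneg _)
            apply inv_anti₀ (by positivity)
            nlinarith
          linarith
  have hGfint : IntervalIntegrable Gf volume p q := by
    apply ContinuousOn.intervalIntegrable
    apply ContinuousOn.add
    · exact hg'.abs.continuousOn.mul continuousOn_const
    · refine continuousOn_const.mul (ContinuousOn.inv₀ (by fun_prop) ?_)
      intro x hx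
      have h1 := hdist x hx
      have hxc : x - c ≠ 0 := by
        intro h; rw [h] at h1; simp at h1; linarith
      positivity
  have hnormw' : ∀ x, ‖((w' x : ℝ) : ℂ) * ph t a x‖ = |w' x| := by
    intro x
    rw [norm_mul, norm_ph, mul_one, Complex.norm_real, Real.norm_eq_abs]
  have hS : ‖∫ x in p..q, ((w' x : ℝ) : ℂ) * ph t a x‖ ≤ ∫ x in p..q, Gf x := by
    refine le_trans (intervalIntegral.norm_integral_le_integral_norm hpq) ?_
    refine intervalIntegral.integral_mono_on hpq ?_ hGfint ?_
    · apply ContinuousOn.intervalIntegrable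
      exact ((Complex.continuous_ofReal.comp_continuousOn hwcont).mul
        (cont_ph t a).continuousOn).norm
    · intro x hx
      rw [hnormw' x]
      exact hW x (by rwa [Set.uIcc_of_le hpq])
  have int1 : IntervalIntegrable (fun x => |g' x| * (2 * t * δ)⁻¹) volume p q :=
    (hg'.abs.mul continuous_const).intervalIntegrable _ _
  have int2 : IntervalIntegrable (fun x => (Mg / (2 * t)) * ((x - c) ^ 2)⁻¹) volume p q := by
    apply ContinuousOn.intervalIntegrable
    refine continuousOn_const.mul (ContinuousOn.inv₀ (by fun_prop) ?_)
    intro x hx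
    have h1 := hdist x hx
    have hxc : x - c ≠ 0 := by
      intro h; rw [h] at h1; simp at h1; linarith
    positivity
  have hsplit : ∫ x in p..q, Gf x
      = (∫ x in p..q, |g' x|) * (2 * t * δ)⁻¹
        + (Mg / (2 * t)) * ∫ x in p..q, ((x - c) ^ 2)⁻¹ := by
    rw [hGf_def]
    rw [intervalIntegral.integral_add int1 int2, intervalIntegral.integral_mul_const,
      intervalIntegral.integral_const_mul]
  have hzeq : ∫ x in p..q, ((x - c) ^ 2)⁻¹ = (p - c)⁻¹ - (q - c)⁻¹ := by
    have h1 : ∫ x in p..q, ((x - c) ^ 2)⁻¹ = ∫ x in p..q, (x - c) ^ (-2 : ℤ) :=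
      intervalIntegral.integral_congr fun x _ => by
        rw [zpow_neg, zpow_two, sq]
    have h2 : ∫ x in p..q, (x - c) ^ (-2 : ℤ) = ∫ x in (p - c)..(q - c), x ^ (-2 : ℤ) := by
      simpa using intervalIntegral.integral_comp_sub_right (fun x => x ^ (-2 : ℤ)) c
    have h3 : (0:ℝ) ∉ Set.uIcc (p - c) (q - c) := by
      rw [Set.uIcc_of_le (by linarith)]
      rintro ⟨ha', hb'⟩
      rcases hside with h | h
      · linarith
      · linarith
    rw [h1, h2, integral_zpow (Or.inr ⟨by norm_num, h3⟩)]
    norm_num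
    ring
  have hzbd : (p - c)⁻¹ - (q - c)⁻¹ ≤ δ⁻¹ := by
    rcases hside with h | h
    · have h0 : 0 < p - c := lt_of_lt_of_le hδ h
      have h1 : (p - c)⁻¹ ≤ δ⁻¹ := inv_anti₀ hδ h
      have h2 : 0 ≤ (q - c)⁻¹ := inv_nonneg.mpr (by linarith)
      linarith
    · have h1 : (c - q)⁻¹ ≤ δ⁻¹ := inv_anti₀ hδ (by linarith)
      have h2 : (q - c)⁻¹ = -(c - q)⁻¹ := by
        rw [← inv_neg, neg_sub]
      have h3 : (p - c)⁻¹ ≤ 0 := inv_nonpos.mpr (by linarith)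
      linarith
  have hend : ∀ x, δ ≤ |x - c| → ‖((w x : ℝ) : ℂ) * ph t a x‖ ≤ |g x| / (2 * t * δ) := by
    intro x hx
    rw [norm_mul, norm_ph, mul_one, Complex.norm_real, Real.norm_eq_abs]
    exact hbd x hx
  have hendp := hend p (hdist p Set.left_mem_uIcc)
  have hendq := hend q (hdist q Set.right_mem_uIcc)
  have htri : ‖((w q : ℝ) : ℂ) * ph t a q - ((w p : ℝ) : ℂ) * ph t a p
      - ∫ x in p..q, ((w' x : ℝ) : ℂ) * ph t a x‖
      ≤ ‖((w q : ℝ) : ℂ) * ph t a q‖ + ‖((w p : ℝ) : ℂ) * ph t a p‖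
        + ‖∫ x in p..q, ((w' x : ℝ) : ℂ) * ph t a x‖ := by
    refine le_trans (norm_sub_le _ _) ?_
    have := norm_sub_le (((w q : ℝ) : ℂ) * ph t a q) (((w p : ℝ) : ℂ) * ph t a p)
    linarith
  have hK : (0:ℝ) ≤ (2 * t * δ)⁻¹ := by positivity
  have hIg0 : (0:ℝ) ≤ Ig :=
    le_trans (intervalIntegral.integral_nonneg hpq fun x _ => abs_nonneg _) hI
  have hGf_le : ∫ x in p..q, Gf x ≤ Ig * (2 * t * δ)⁻¹ + Mg * (2 * t * δ)⁻¹ := by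
    rw [hsplit, hzeq]
    have h1 : (∫ x in p..q, |g' x|) * (2 * t * δ)⁻¹ ≤ Ig * (2 * t * δ)⁻¹ :=
      mul_le_mul_of_nonneg_right hI hK
    have h2 : (Mg / (2 * t)) * ((p - c)⁻¹ - (q - c)⁻¹) ≤ (Mg / (2 * t)) * δ⁻¹ :=
      mul_le_mul_of_nonneg_left hzbd (by positivity)
    have h3 : (Mg / (2 * t)) * δ⁻¹ = Mg * (2 * t * δ)⁻¹ := by
      field_simp
    linarith
  have hfin : |g q| / (2 * t * δ) + |g p| / (2 * t * δ)
      + (Ig * (2 * t * δ)⁻¹ + Mg * (2 * t * δ)⁻¹)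
      = (|g p| + |g q| + Ig + Mg) / (2 * t * δ) := by
    field_simp
    ring
  calc ‖((w q : ℝ) : ℂ) * ph t a q - ((w p : ℝ) : ℂ) * ph t a p
      - ∫ x in p..q, ((w' x : ℝ) : ℂ) * ph t a x‖
      ≤ ‖((w q : ℝ) : ℂ) * ph t a q‖ + ‖((w p : ℝ) : ℂ) * ph t a p‖
        + ‖∫ x in p..q, ((w' x : ℝ) : ℂ) * ph t a x‖ := htri
    _ ≤ |g q| / (2 * t * δ) + |g p| / (2 * t * δ)
        + (Ig * (2 * t * δ)⁻¹ + Mg * (2 * t * δ)⁻¹) := by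
        have := le_trans hS hGf_le
        linarith
    _ = (|g p| + |g q| + Ig + Mg) / (2 * t * δ) := hfin

lemma vdc_pos (g g' : ℝ → ℝ) (hd : ∀ x, HasDerivAt g (g' x) x) (hg' : Continuous g')
    (t a B Mg Ig : ℝ) (ht : 0 < t)
    (hsupp : ∀ x, B ≤ |x| → g x = 0)
    (hM : ∀ x, |g x| ≤ Mg)
    (hI : ∀ p q : ℝ, p ≤ q → ∫ x in p..q, |g' x| ≤ Ig) :
    ‖∫ x : ℝ, ph t a x * (g x : ℂ)‖ ≤ 4 * (Mg + Ig) * (Real.sqrt t)⁻¹ := by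
  have hgc : Continuous g := by
    rw [continuous_iff_continuousAt]; exact fun x => (hd x).continuousAt
  set s : ℝ := Real.sqrt t with hs_def
  have hst : 0 < s := Real.sqrt_pos.mpr ht
  have hs2 : s ^ 2 = t := Real.sq_sqrt ht.le
  set c : ℝ := -a / (2 * t) with hc_def
  set δ : ℝ := s⁻¹ with hδ_def
  have hδ : 0 < δ := by positivity
  set R : ℝ := |B| + |c| + δ with hR_def
  have hRδ : δ ≤ R := by
    have := abs_nonneg B; have := abs_nonneg c; rw [hR_def]; linarith
  have hgq : g (c + R) = 0 := by
    apply hsupp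
    have h1 : 0 < c + R := by
      have := abs_nonneg B; have := neg_abs_le c; rw [hR_def]; linarith
    rw [_root_.abs_of_pos h1]
    have := le_abs_self B; have := neg_abs_le c; rw [hR_def]; linarith
  have hgp : g (c - R) = 0 := by
    apply hsupp
    have h1 : c - R < 0 := by
      have := abs_nonneg B; have := le_abs_self c; rw [hR_def]; linarith
    rw [abs_of_neg h1]
    have := le_abs_self B; have := le_abs_self c; rw [hR_def]; linarith
  have hFc : Continuous (fun x => ph t a x * (g x : ℂ)) := (cont_ph t a).mul (by fun_prop)
  have hwhole : (∫ x : ℝ, ph t a x * (g x : ℂ))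
      = ∫ x in (c - R)..(c + R), ph t a x * (g x : ℂ) := by
    rw [intervalIntegral.integral_eq_integral_of_support_subset]
    intro x hx
    have hgx : g x ≠ 0 := by
      intro h; apply hx; simp [h]
    have hxB : |x| < B := by
      by_contra h
      exact hgx (hsupp x (le_of_not_gt h))
    have h1 := le_abs_self x
    have h2 := neg_abs_le x
    have h3 := le_abs_self B
    have h4 := le_abs_self c
    have h5 := neg_abs_le c
    constructor
    · rw [hR_def]; linarith
    · rw [hR_def]; linarith
  have hint : ∀ u v : ℝ, IntervalIntegrable (fun x => ph t a x * (g x : ℂ)) volume u v :=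
    fun u v => hFc.intervalIntegrable u v
  have hsplit : (∫ x in (c - R)..(c + R), ph t a x * (g x : ℂ))
      = (∫ x in (c - R)..(c - δ), ph t a x * (g x : ℂ))
        + (∫ x in (c - δ)..(c + δ), ph t a x * (g x : ℂ))
        + (∫ x in (c + δ)..(c + R), ph t a x * (g x : ℂ)) := by
    rw [intervalIntegral.integral_add_adjacent_intervals (hint _ _) (hint _ _),
      intervalIntegral.integral_add_adjacent_intervals (hint _ _) (hint _ _)]
  have hmid : ‖∫ x in (c - δ)..(c + δ), ph t a x * (g x : ℂ)‖ ≤ Mg * (2 * δ) := by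
    have h1 : ∀ x ∈ Set.uIoc (c - δ) (c + δ), ‖ph t a x * (g x : ℂ)‖ ≤ Mg := by
      intro x _
      rw [norm_mul, norm_ph, one_mul, Complex.norm_real, Real.norm_eq_abs]
      exact hM x
    have h2 := intervalIntegral.norm_integral_le_of_norm_le_const h1
    have h3 : |c + δ - (c - δ)| = 2 * δ := by
      rw [_root_.abs_of_pos (by linarith : (0:ℝ) < c + δ - (c - δ))]; ring
    rw [h3] at h2
    linarith [h2]
  have hMg0 : 0 ≤ Mg := le_trans (abs_nonneg _) (hM 0)
  have hIg0 : 0 ≤ Ig := by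
    have := hI 0 0 le_rfl
    simpa using this
  have hleft : ‖∫ x in (c - R)..(c - δ), ph t a x * (g x : ℂ)‖
      ≤ (2 * Mg + Ig) / (2 * t * δ) := by
    have h := tail_est g g' hd hg' t a c δ Mg Ig ht hδ hc_def hM (c - R) (c - δ)
      (by linarith) (Or.inr (by linarith)) (hI _ _ (by linarith))
    refine le_trans h ?_
    have hnum : |g (c - R)| + |g (c - δ)| + Ig + Mg ≤ 2 * Mg + Ig := by
      rw [hgp, abs_zero]
      have := hM (c - δ)
      linarith
    exact (div_le_div_iff_of_pos_right (by positivity)).mpr hnum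
  have hright : ‖∫ x in (c + δ)..(c + R), ph t a x * (g x : ℂ)‖
      ≤ (2 * Mg + Ig) / (2 * t * δ) := by
    have h := tail_est g g' hd hg' t a c δ Mg Ig ht hδ hc_def hM (c + δ) (c + R)
      (by linarith) (Or.inl (by linarith)) (hI _ _ (by linarith))
    refine le_trans h ?_
    have hnum : |g (c + δ)| + |g (c + R)| + Ig + Mg ≤ 2 * Mg + Ig := by
      rw [hgq, abs_zero]
      have := hM (c + δ)
      linarith
    exact (div_le_div_iff_of_pos_right (by positivity)).mpr hnum
  have h2tδ : 2 * t * δ = 2 * s := by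
    have hts : t = s * s := by nlinarith
    rw [hδ_def, hts]
    field_simp
  rw [hwhole, hsplit]
  have htri : ‖(∫ x in (c - R)..(c - δ), ph t a x * (g x : ℂ))
        + (∫ x in (c - δ)..(c + δ), ph t a x * (g x : ℂ))
        + (∫ x in (c + δ)..(c + R), ph t a x * (g x : ℂ))‖
      ≤ (2 * Mg + Ig) / (2 * s) + Mg * (2 * δ) + (2 * Mg + Ig) / (2 * s) := by
    rw [← h2tδ] at *
    refine le_trans (norm_add_le _ _) ?_
    have := norm_add_le (∫ x in (c - R)..(c - δ), ph t a x * (g x : ℂ))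
      (∫ x in (c - δ)..(c + δ), ph t a x * (g x : ℂ))
    linarith
  refine le_trans htri ?_
  rw [hδ_def]
  have key : (2 * Mg + Ig) / (2 * s) + Mg * (2 * s⁻¹) + (2 * Mg + Ig) / (2 * s)
      = (4 * Mg + Ig) * s⁻¹ := by
    field_simp
    ring
  rw [key]
  exact mul_le_mul_of_nonneg_right (by linarith) (by positivity)

lemma vdc_abs (g g' : ℝ → ℝ) (hd : ∀ x, HasDerivAt g (g' x) x) (hg' : Continuous g')
    (t a B Mg Ig : ℝ) (ht : t ≠ 0)
    (hsupp : ∀ x, B ≤ |x| → g x = 0)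
    (hM : ∀ x, |g x| ≤ Mg)
    (hI : ∀ p q : ℝ, p ≤ q → ∫ x in p..q, |g' x| ≤ Ig) :
    ‖∫ x : ℝ, ph t a x * (g x : ℂ)‖ ≤ 4 * (Mg + Ig) * |t| ^ (-(1:ℝ)/2) := by
  have habs : |t| ^ (-(1:ℝ)/2) = (Real.sqrt |t|)⁻¹ := by
    rw [neg_div, Real.rpow_neg (abs_nonneg t), Real.sqrt_eq_rpow]
  rw [habs]
  rcases ht.lt_or_gt with hneg | hpos
  · have hconj : ∀ x : ℝ, (starRingEnd ℂ) (ph t a x * (g x : ℂ))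
        = ph (-t) (-a) x * (g x : ℂ) := by
      intro x
      rw [map_mul, Complex.conj_ofReal, ph, ph, ← Complex.exp_conj]
      congr 2
      rw [map_mul, Complex.conj_ofReal, Complex.conj_I]
      push_cast
      ring
    have h1 : ‖∫ x : ℝ, ph t a x * (g x : ℂ)‖ = ‖∫ x : ℝ, ph (-t) (-a) x * (g x : ℂ)‖ := by
      calc ‖∫ x : ℝ, ph t a x * (g x : ℂ)‖
          = ‖(starRingEnd ℂ) (∫ x : ℝ, ph t a x * (g x : ℂ))‖ := (RCLike.norm_conj _).symm
        _ = ‖∫ x : ℝ, (starRingEnd ℂ) (ph t a x * (g x : ℂ))‖ := by rw [integral_conj]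
        _ = ‖∫ x : ℝ, ph (-t) (-a) x * (g x : ℂ)‖ := by simp_rw [hconj]
    rw [h1, abs_of_neg hneg]
    exact vdc_pos g g' hd hg' (-t) (-a) B Mg Ig (by linarith) hsupp hM hI
  · rw [abs_of_pos hpos]
    exact vdc_pos g g' hd hg' t a B Mg Ig hpos hsupp hM hI

theorem stmt_1 (lam0 : ℝ) (hlam0 : 0 < lam0)
    (χ φ : ℝ → ℝ) (hχ : ContDiff ℝ (⊤ : ℕ∞) χ)
    (hχ0 : ∀ x : ℝ, x ≤ lam0 → χ x = 0) (hχ1 : ∀ x : ℝ, 2 * lam0 ≤ x → χ x = 1)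
    (hχr : ∀ x : ℝ, χ x ∈ Set.Icc (0 : ℝ) 1)
    (hφ : ContDiff ℝ (⊤ : ℕ∞) φ) (hφ1 : ∀ x : ℝ, |x| ≤ 1 → φ x = 1)
    (hφ0 : ∀ x : ℝ, 2 ≤ |x| → φ x = 0) :
    ∃ C : ℝ, ∀ (n : ℕ) (L t a : ℝ), 1 ≤ L → t ≠ 0 →
      ‖∫ l : ℝ, Complex.exp (Complex.I * ((t * l ^ 2 + a * l : ℝ) : ℂ)) *
          ((χ (l ^ 2) * φ (l ^ 2 / L) * l ^ (-(n : ℤ)) : ℝ) : ℂ)‖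
        ≤ C * (1 + n) * lam0 ^ (-(n : ℝ) / 2) * |t| ^ (-(1 : ℝ) / 2) := by
  have hχc : Continuous χ := hχ.continuous
  have hφc : Continuous φ := hφ.continuous
  have hχ'c : Continuous (deriv χ) := hχ.continuous_deriv (by simp)
  have hφ'c : Continuous (deriv φ) := hφ.continuous_deriv (by simp)
  have hχabs : ∀ y, |χ y| ≤ 1 := by
    intro y
    rcases hχr y with ⟨h0, h1⟩
    rw [abs_le]; constructor <;> linarith
  -- derivative vanishing lemmas
  have derivχ_lo : ∀ y : ℝ, y < lam0 → deriv χ y = 0 := by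
    intro y hy
    have hev : χ =ᶠ[nhds y] fun _ => (0:ℝ) := by
      filter_upwards [isOpen_Iio.mem_nhds (show y ∈ Set.Iio lam0 from hy)] with z hz
      exact hχ0 z (le_of_lt hz)
    rw [hev.deriv_eq, deriv_const]
  have derivχ_hi : ∀ y : ℝ, 2 * lam0 < y → deriv χ y = 0 := by
    intro y hy
    have hev : χ =ᶠ[nhds y] fun _ => (1:ℝ) := by
      filter_upwards [isOpen_Ioi.mem_nhds (show y ∈ Set.Ioi (2*lam0) from hy)] with z hz
      exact hχ1 z (le_of_lt hz)
    rw [hev.deriv_eq, deriv_const]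
  have derivφ_hi : ∀ y : ℝ, 2 < |y| → deriv φ y = 0 := by
    intro y hy
    have hopen : IsOpen {z : ℝ | 2 < |z|} := isOpen_lt continuous_const continuous_abs
    have hev : φ =ᶠ[nhds y] fun _ => (0:ℝ) := by
      filter_upwards [hopen.mem_nhds hy] with z hz
      exact hφ0 z (le_of_lt hz)
    rw [hev.deriv_eq, deriv_const]
  -- global bounds
  obtain ⟨Mφ, hMφIcc⟩ := (isCompact_Icc (a := (-2:ℝ)) (b := 2)).exists_bound_of_continuousOn
    hφc.continuousOn
  have hMφ0 : 0 ≤ Mφ := le_trans (norm_nonneg _) (hMφIcc 0 (by norm_num))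
  have hMφ : ∀ y, |φ y| ≤ Mφ := by
    intro y
    rcases le_or_gt (|y|) 2 with h | h
    · exact hMφIcc y (abs_le.mp h)
    · rw [hφ0 y h.le, abs_zero]; exact hMφ0
  obtain ⟨Kχ, hKχIcc⟩ := (isCompact_Icc (a := lam0) (b := 2*lam0)).exists_bound_of_continuousOn
    hχ'c.continuousOn
  have hKχ0 : 0 ≤ Kχ := le_trans (norm_nonneg _)
    (hKχIcc lam0 (by constructor <;> linarith))
  have hKχ : ∀ y, |deriv χ y| ≤ Kχ := by
    intro y
    rcases lt_or_ge y lam0 with h | h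
    · rw [derivχ_lo y h, abs_zero]; exact hKχ0
    rcases le_or_gt y (2*lam0) with h2 | h2
    · exact hKχIcc y ⟨h, h2⟩
    · rw [derivχ_hi y h2, abs_zero]; exact hKχ0
  obtain ⟨Kφ, hKφIcc⟩ := (isCompact_Icc (a := (-2:ℝ)) (b := 2)).exists_bound_of_continuousOn
    hφ'c.continuousOn
  have hKφ0 : 0 ≤ Kφ := le_trans (norm_nonneg _) (hKφIcc 0 (by norm_num))
  have hKφ : ∀ y, |deriv φ y| ≤ Kφ := by
    intro y
    rcases le_or_gt (|y|) 2 with h | h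
    · exact hKφIcc y (abs_le.mp h)
    · rw [derivφ_hi y h, abs_zero]; exact hKφ0
  set sl : ℝ := Real.sqrt lam0 with hsl_def
  have hsl : 0 < sl := Real.sqrt_pos.mpr hlam0
  have hsl2 : sl ^ 2 = lam0 := Real.sq_sqrt hlam0.le
  set s2 : ℝ := Real.sqrt (2 * lam0) with hs2_def
  have hs2pos : 0 < s2 := Real.sqrt_pos.mpr (by linarith)
  have hs2sq : s2 ^ 2 = 2 * lam0 := Real.sq_sqrt (by linarith)
  set A1 : ℝ := (Kχ * (2 * s2) * Mφ) * (2 * (s2 + 1)) with hA1_def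
  set A2 : ℝ := Kφ * (36 + 12 * lam0) with hA2_def
  set A3 : ℝ := 2 * Mφ with hA3_def
  have hA1nn : 0 ≤ A1 := by positivity
  have hA2nn : 0 ≤ A2 := by positivity
  have hA3nn : 0 ≤ A3 := by positivity
  refine ⟨4 * (Mφ + (A1 + A2 + A3)), ?_⟩
  intro n L t a hL ht
  set ν : ℝ := lam0 ^ (-(n : ℝ) / 2) with hν_def
  have hνpos : 0 < ν := Real.rpow_pos_of_pos hlam0 _
  -- key zpow bound
  have hzb : ∀ x : ℝ, lam0 ≤ x ^ 2 → |x ^ (-(n:ℤ))| ≤ ν := by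
    intro x hx
    have hxabs : sl ≤ |x| := by
      have h := Real.sqrt_le_sqrt hx
      rwa [Real.sqrt_sq_eq_abs] at h
    have h1 : sl ^ n ≤ |x| ^ n := pow_le_pow_left₀ hsl.le hxabs n
    have h2 : |x ^ (-(n:ℤ))| = (|x| ^ n)⁻¹ := by
      rw [zpow_neg, zpow_natCast, abs_inv, _root_.abs_pow]
    have h3 : (|x| ^ n)⁻¹ ≤ (sl ^ n)⁻¹ := inv_anti₀ (pow_pos hsl n) h1
    have h4 : (sl ^ n)⁻¹ = ν := by
      rw [hν_def, hsl_def,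
        show -(n:ℝ)/2 = (1/2 : ℝ) * (-(n:ℝ)) by ring,
        Real.rpow_mul hlam0.le, ← Real.sqrt_eq_rpow,
        Real.rpow_neg (Real.sqrt_nonneg _), Real.rpow_natCast]
    rw [h2, ← h4]
    exact h3
  have hslν : (sl : ℝ) ^ (-(n:ℤ)) = ν := by
    rw [zpow_neg, zpow_natCast, hν_def, hsl_def,
      show -(n:ℝ)/2 = (1/2 : ℝ) * (-(n:ℝ)) by ring,
      Real.rpow_mul hlam0.le, ← Real.sqrt_eq_rpow,
      Real.rpow_neg (Real.sqrt_nonneg _), Real.rpow_natCast]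
  set RB : ℝ := Real.sqrt (2 * L) + sl + 1 with hRB_def
  have hL0 : (0:ℝ) < L := by linarith
  have hsqL : Real.sqrt (2 * L) ^ 2 = 2 * L := Real.sq_sqrt (by linarith)
  have hsqLpos : 0 < Real.sqrt (2 * L) := Real.sqrt_pos.mpr (by linarith)
  have hRBpos : 0 < RB := by rw [hRB_def]; linarith
  have hslRB : sl ≤ RB := by rw [hRB_def]; linarith
  set p1 : ℝ → ℝ := fun l => deriv χ (l ^ 2) * (2 * l) * φ (l ^ 2 / L) * l ^ (-(n:ℤ))
    with hp1_def
  set p2 : ℝ → ℝ := fun l => χ (l ^ 2) * (deriv φ (l ^ 2 / L) * (2 * l / L)) * l ^ (-(n:ℤ))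
    with hp2_def
  set p3 : ℝ → ℝ := fun l => χ (l ^ 2) * φ (l ^ 2 / L) * (((-(n:ℤ)) : ℝ) * l ^ (-(n:ℤ) - 1))
    with hp3_def
  set g : ℝ → ℝ := fun l => χ (l ^ 2) * φ (l ^ 2 / L) * l ^ (-(n:ℤ)) with hg_def
  set g' : ℝ → ℝ := fun l => p1 l + p2 l + p3 l with hg'_def
  have hnhds0 : {y : ℝ | y ^ 2 < lam0} ∈ nhds (0:ℝ) := by
    have hop : IsOpen {y : ℝ | y ^ 2 < lam0} := isOpen_lt (by fun_prop) continuous_const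
    exact hop.mem_nhds (by simpa using hlam0)
  have hevg : ∀ x : ℝ, x ^ 2 < lam0 → g x = 0 := by
    intro x hx
    rw [hg_def]
    simp [hχ0 _ hx.le]
  have hd : ∀ x : ℝ, HasDerivAt g (g' x) x := by
    intro x
    rcases ne_or_eq x 0 with hx | hx
    · have hsq : HasDerivAt (fun l : ℝ => l ^ 2) (2 * x) x := by
        simpa using hasDerivAt_pow 2 x
      have hχd : HasDerivAt (fun l : ℝ => χ (l ^ 2)) (deriv χ (x ^ 2) * (2 * x)) x :=
        (((hχ.differentiable (by simp)) (x ^ 2)).hasDerivAt).comp x hsq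
      have hφd : HasDerivAt (fun l : ℝ => φ (l ^ 2 / L))
          (deriv φ (x ^ 2 / L) * (2 * x / L)) x := by
        have hinner : HasDerivAt (fun l : ℝ => l ^ 2 / L) (2 * x / L) x := hsq.div_const L
        exact (((hφ.differentiable (by simp)) (x ^ 2 / L)).hasDerivAt).comp x hinner
      have hzd := hasDerivAt_zpow (-(n:ℤ)) x (Or.inl hx)
      have hfin := (hχd.mul hφd).mul hzd
      refine hfin.congr_deriv ?_
      simp only [hg'_def, hp1_def, hp2_def, hp3_def, Pi.mul_apply]
      push_cast
      ring
    · subst hx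
      have hev : g =ᶠ[nhds 0] fun _ => (0:ℝ) := by
        filter_upwards [hnhds0] with y hy using hevg y hy
      have h0 : HasDerivAt g 0 0 := (hasDerivAt_const (0:ℝ) (0:ℝ)).congr_of_eventuallyEq hev
      have hz : g' 0 = 0 := by
        rw [hg'_def, hp1_def, hp2_def, hp3_def]
        simp [hχ0 0 hlam0.le]
      rw [hz]
      exact h0
  have contAux : ∀ u : ℝ → ℝ, (∀ x : ℝ, x ≠ 0 → ContinuousAt u x) →
      (∀ x : ℝ, x ^ 2 < lam0 → u x = 0) → Continuous u := by
    intro u hu h0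
    rw [continuous_iff_continuousAt]
    intro x
    rcases ne_or_eq x 0 with hx | hx
    · exact hu x hx
    · subst hx
      have hev : u =ᶠ[nhds (0:ℝ)] fun _ => (0:ℝ) := by
        filter_upwards [hnhds0] with y hy using h0 y hy
      exact ContinuousAt.congr continuousAt_const hev.symm
  have hzcont : ∀ (m : ℤ) (x : ℝ), x ≠ 0 → ContinuousAt (fun l : ℝ => l ^ m) x :=
    fun m x hx => continuousAt_zpow₀ x m (Or.inl hx)
  have cont_p1 : Continuous p1 := by
    apply contAux
    · intro x hx
      have c1 : Continuous (fun l : ℝ => deriv χ (l ^ 2) * (2 * l) * φ (l ^ 2 / L)) := by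
        fun_prop
      exact c1.continuousAt.mul (hzcont _ x hx)
    · intro x hx
      rw [hp1_def]
      simp [derivχ_lo _ hx]
  have cont_p2 : Continuous p2 := by
    apply contAux
    · intro x hx
      have c2 : Continuous (fun l : ℝ => χ (l ^ 2) * (deriv φ (l ^ 2 / L) * (2 * l / L))) := by
        fun_prop
      exact c2.continuousAt.mul (hzcont _ x hx)
    · intro x hx
      rw [hp2_def]
      simp [hχ0 _ hx.le]
  have cont_p3 : Continuous p3 := by
    apply contAux
    · intro x hx
      have c3 : Continuous (fun l : ℝ => χ (l ^ 2) * φ (l ^ 2 / L)) := by fun_prop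
      exact c3.continuousAt.mul (continuousAt_const.mul (hzcont _ x hx))
    · intro x hx
      rw [hp3_def]
      simp [hχ0 _ hx.le]
  have hg'cont : Continuous g' := by
    rw [hg'_def]
    exact (cont_p1.add cont_p2).add cont_p3
  -- vanishing beyond RB
  have hbig : ∀ x : ℝ, RB ≤ |x| → 2 ≤ |x ^ 2 / L| := by
    intro x hx
    have h1 : Real.sqrt (2 * L) ≤ |x| := by rw [hRB_def] at hx; linarith
    have h2 : 2 * L ≤ x ^ 2 := by
      calc 2 * L = Real.sqrt (2 * L) ^ 2 := hsqL.symm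
        _ ≤ |x| ^ 2 := pow_le_pow_left₀ hsqLpos.le h1 2
        _ = x ^ 2 := sq_abs x
    rw [abs_div, _root_.abs_of_nonneg (sq_nonneg x), _root_.abs_of_pos hL0, le_div_iff₀ hL0]
    linarith
  have hsupp : ∀ x : ℝ, RB ≤ |x| → g x = 0 := by
    intro x hx
    rw [hg_def]
    simp [hφ0 _ (hbig x hx)]
  have hbigs : ∀ x : ℝ, RB ≤ |x| → 2 < |x ^ 2 / L| := by
    intro x hx
    have h1 : Real.sqrt (2 * L) < |x| := by rw [hRB_def] at hx; linarith [hsl]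
    have h2 : 2 * L < x ^ 2 := by
      calc 2 * L = Real.sqrt (2 * L) ^ 2 := hsqL.symm
        _ < |x| ^ 2 := by nlinarith [hsqLpos, abs_nonneg x]
        _ = x ^ 2 := sq_abs x
    rw [abs_div, _root_.abs_of_nonneg (sq_nonneg x), _root_.abs_of_pos hL0, lt_div_iff₀ hL0]
    linarith
  have hsuppp : ∀ x : ℝ, RB ≤ |x| → p1 x = 0 ∧ p2 x = 0 ∧ p3 x = 0 := by
    intro x hx
    have h1 := hφ0 _ (hbigs x hx).le
    have h2 := derivφ_hi _ (hbigs x hx)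
    refine ⟨?_, ?_, ?_⟩
    · rw [hp1_def]; simp [h1]
    · rw [hp2_def]; simp [h2]
    · rw [hp3_def]; simp [h1]
  have hM : ∀ x : ℝ, |g x| ≤ Mφ * ν := by
    intro x
    rcases le_or_gt (x ^ 2) lam0 with h | h
    · rw [hg_def]
      simp only
      rw [hχ0 _ h]
      simp only [zero_mul, abs_zero]
      positivity
    · rw [hg_def]
      simp only
      rw [abs_mul, abs_mul]
      calc |χ (x ^ 2)| * |φ (x ^ 2 / L)| * |x ^ (-(n:ℤ))| ≤ 1 * Mφ * ν := by
            apply mul_le_mul (mul_le_mul (hχabs _) (hMφ _) (abs_nonneg _) (by norm_num))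
              (hzb x h.le) (abs_nonneg _) (by positivity)
        _ = Mφ * ν := by ring
  have habs_zpow : ∀ (y : ℝ) (m : ℤ), |y ^ m| = |y| ^ m := by
    intro y m
    obtain ⟨k, rfl | rfl⟩ := Int.eq_nat_or_neg m
    · rw [zpow_natCast, zpow_natCast, _root_.abs_pow]
    · rw [zpow_neg, zpow_neg, abs_inv, zpow_natCast, zpow_natCast, _root_.abs_pow]
  have hcs : ∀ u : ℝ → ℝ, Continuous u → (∀ x : ℝ, RB ≤ |x| → u x = 0) →
      Integrable u := by
    intro u hu h0
    apply hu.integrable_of_hasCompactSupport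
    apply HasCompactSupport.intro (isCompact_Icc (a := -RB) (b := RB))
    intro x hx
    apply h0
    simp only [Set.mem_Icc, not_and_or, not_le] at hx
    rcases hx with h | h
    · rw [abs_of_neg (by linarith)]; linarith
    · rw [_root_.abs_of_pos (by linarith)]; linarith
  have mul3 : ∀ a1 a2 a3 b1 b2 b3 : ℝ, |a1| ≤ b1 → |a2| ≤ b2 → |a3| ≤ b3 →
      |a1 * a2 * a3| ≤ b1 * b2 * b3 := by
    intro a1 a2 a3 b1 b2 b3 h1 h2 h3
    rw [abs_mul, abs_mul]
    have n1 := abs_nonneg a1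
    have n2 := abs_nonneg a2
    have n3 := abs_nonneg a3
    apply mul_le_mul (mul_le_mul h1 h2 n2 (le_trans n1 h1)) h3 n3
    nlinarith
  have mul4 : ∀ a1 a2 a3 a4 b1 b2 b3 b4 : ℝ, |a1| ≤ b1 → |a2| ≤ b2 → |a3| ≤ b3 → |a4| ≤ b4 →
      |a1 * a2 * a3 * a4| ≤ b1 * b2 * b3 * b4 := by
    intro a1 a2 a3 a4 b1 b2 b3 b4 h1 h2 h3 h4
    rw [abs_mul]
    have hb1 := le_trans (abs_nonneg a1) h1
    have hb2 := le_trans (abs_nonneg a2) h2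
    have hb3 := le_trans (abs_nonneg a3) h3
    exact mul_le_mul (mul3 _ _ _ _ _ _ h1 h2 h3) h4 (abs_nonneg _) (by positivity)
  have hconst1 : 0 ≤ Kχ * (2 * s2) * Mφ * ν :=
    mul_nonneg (by positivity) hνpos.le
  have hB1 : ∫ x : ℝ, |p1 x| ≤ (Kχ * (2 * s2) * Mφ * ν) * (2 * (s2 + 1)) := by
    have hsupp1 : Function.support (fun x => |p1 x|) ⊆ Set.Ioc (-(s2+1)) (s2+1) := by
      intro x hx
      simp only [Function.mem_support, ne_eq, abs_eq_zero] at hx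
      have hxb : |x| ≤ s2 := by
        by_contra hcon
        push_neg at hcon
        apply hx
        have h2 : 2 * lam0 < x ^ 2 := by
          calc 2 * lam0 = s2 ^ 2 := hs2sq.symm
            _ < |x| ^ 2 := by gcongr
            _ = x ^ 2 := sq_abs x
        rw [hp1_def]
        simp [derivχ_hi _ h2]
      constructor
      · have := neg_abs_le x; linarith
      · have := le_abs_self x; linarith
    rw [← intervalIntegral.integral_eq_integral_of_support_subset hsupp1]
    have hmono : ∫ x in (-(s2+1))..(s2+1), |p1 x|
        ≤ ∫ _x in (-(s2+1))..(s2+1), (Kχ * (2 * s2) * Mφ * ν) := by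
      refine intervalIntegral.integral_mono_on (by linarith) (cont_p1.abs.intervalIntegrable _ _)
        intervalIntegrable_const ?_
      intro x hx
      rcases lt_or_ge (x ^ 2) lam0 with h | h
      · rw [hp1_def]
        simp only
        rw [derivχ_lo _ h]
        simpa using hconst1
      rcases lt_or_ge (2 * lam0) (x ^ 2) with h2 | h2
      · rw [hp1_def]
        simp only
        rw [derivχ_hi _ h2]
        simpa using hconst1
      · have hxs : |x| ≤ s2 := by
          nlinarith [_root_.sq_abs x, abs_nonneg x, hs2pos]
        have habs2 : |2 * x| ≤ 2 * s2 := by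
          rw [abs_mul, _root_.abs_two]
          linarith
        rw [hp1_def]
        exact mul4 _ _ _ _ _ _ _ _ (hKχ _) habs2 (hMφ _) (hzb x h)
    refine le_trans hmono (le_of_eq ?_)
    rw [intervalIntegral.integral_const, smul_eq_mul]
    ring
  have hB2 : ∫ x : ℝ, |p2 x| ≤ A2 * ν := by
    have hsupp2 : Function.support (fun x => |p2 x|) ⊆ Set.Ioc (-RB) RB := by
      intro x hx
      simp only [Function.mem_support, ne_eq, abs_eq_zero] at hx
      have hxb : |x| < RB := by
        by_contra hcon
        push_neg at hcon
        exact hx (hsuppp x hcon).2.1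
      exact ⟨by linarith [neg_abs_le x], by linarith [le_abs_self x]⟩
    rw [← intervalIntegral.integral_eq_integral_of_support_subset hsupp2]
    have hmono : ∫ x in (-RB)..RB, |p2 x|
        ≤ ∫ _x in (-RB)..RB, (1 * (Kφ * (2 * RB / L)) * ν) := by
      refine intervalIntegral.integral_mono_on (by linarith) (cont_p2.abs.intervalIntegrable _ _)
        intervalIntegrable_const ?_
      intro x hx
      rcases le_or_gt (x ^ 2) lam0 with h | h
      · rw [hp2_def]
        simp only
        rw [hχ0 _ h]
        simp only [zero_mul, abs_zero]
        positivity
      · have hxRB : |x| ≤ RB := abs_le.mpr ⟨hx.1, hx.2⟩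
        have hx2 : |2 * x / L| ≤ 2 * RB / L := by
          rw [abs_div, abs_mul, _root_.abs_two, _root_.abs_of_pos hL0]
          gcongr
        have h2' : |deriv φ (x ^ 2 / L) * (2 * x / L)| ≤ Kφ * (2 * RB / L) := by
          rw [abs_mul]
          exact mul_le_mul (hKφ _) hx2 (abs_nonneg _) hKφ0
        rw [hp2_def]
        exact mul3 _ _ _ _ _ _ (hχabs _) h2' (hzb x h.le)
    refine le_trans hmono ?_
    rw [intervalIntegral.integral_const, smul_eq_mul]
    have hRB2 : 4 * RB ^ 2 / L ≤ 36 + 12 * lam0 := by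
      rw [div_le_iff₀ hL0]
      have h1 : RB ^ 2 ≤ (9 + 3 * lam0) * L := by
        rw [hRB_def]
        nlinarith [hsqL, hsl2, hsqLpos.le, hsl.le, hL, hlam0.le,
          sq_nonneg (Real.sqrt (2 * L) - sl), sq_nonneg (Real.sqrt (2 * L) - 1),
          sq_nonneg (sl - 1)]
      nlinarith [hlam0.le, hL]
    have heq : (RB - -RB) * (1 * (Kφ * (2 * RB / L)) * ν) = Kφ * (4 * RB ^ 2 / L) * ν := by
      field_simp
      ring
    rw [heq, hA2_def]
    exact mul_le_mul_of_nonneg_right (mul_le_mul_of_nonneg_left hRB2 hKφ0) hνpos.le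
  have hB3 : ∫ x : ℝ, |p3 x| ≤ A3 * ν := by
    rcases Nat.eq_zero_or_pos n with hn0 | hn
    · have hz : ∀ x : ℝ, p3 x = 0 := by
        intro x
        rw [hp3_def]
        simp [hn0]
      simp only [hz, _root_.abs_zero, MeasureTheory.integral_zero]
      exact mul_nonneg hA3nn hνpos.le
    · have hn' : (0:ℝ) < n := by exact_mod_cast hn
      have hnZ : -(n:ℤ) - 1 ≠ -1 := by omega
      have hsupp3 : Function.support (fun x => |p3 x|) ⊆ Set.Ioc (-RB) RB := by
        intro x hx
        simp only [Function.mem_support, ne_eq, abs_eq_zero] at hx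
        have hxb : |x| < RB := by
          by_contra hcon
          push_neg at hcon
          exact hx (hsuppp x hcon).2.2
        exact ⟨by linarith [neg_abs_le x], by linarith [le_abs_self x]⟩
      rw [← intervalIntegral.integral_eq_integral_of_support_subset hsupp3]
      have hii : ∀ u v : ℝ, IntervalIntegrable (fun x => |p3 x|) volume u v :=
        fun u v => cont_p3.abs.intervalIntegrable u v
      have hadd : (∫ x in (-RB)..RB, |p3 x|)
          = (∫ x in (-RB)..(-sl), |p3 x|) + (∫ x in (-sl)..sl, |p3 x|)
            + ∫ x in sl..RB, |p3 x| := by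
        rw [intervalIntegral.integral_add_adjacent_intervals (hii _ _) (hii _ _),
          intervalIntegral.integral_add_adjacent_intervals (hii _ _) (hii _ _)]
      have hmid : (∫ x in (-sl)..sl, |p3 x|) = 0 := by
        have hcg : ∀ x ∈ Set.uIcc (-sl) sl, |p3 x| = (fun _ => (0:ℝ)) x := by
          intro x hx
          rw [Set.uIcc_of_le (by linarith)] at hx
          have hx2 : x ^ 2 ≤ lam0 := by
            nlinarith [hx.1, hx.2, hsl.le]
          rw [hp3_def]
          simp [hχ0 _ hx2]
        rw [intervalIntegral.integral_congr hcg]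
        simp
      have h0mem : ∀ x ∈ Set.uIcc sl RB, x ≠ 0 := by
        intro x hx
        rw [Set.uIcc_of_le hslRB] at hx
        have := hx.1
        intro hc
        rw [hc] at this
        linarith
      have hbint : IntervalIntegrable (fun x : ℝ => 1 * Mφ * ((n:ℝ) * x ^ (-(n:ℤ) - 1)))
          volume sl RB := by
        apply ContinuousOn.intervalIntegrable
        refine continuousOn_const.mul (continuousOn_const.mul ?_)
        exact fun x hx => ((hzcont _ x (h0mem x hx)).continuousWithinAt)
      have hzint : (∫ x in sl..RB, 1 * Mφ * ((n:ℝ) * x ^ (-(n:ℤ) - 1))) ≤ Mφ * ν := by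
        have h0m : (0:ℝ) ∉ Set.uIcc sl RB := fun h => h0mem 0 h rfl
        have hpull : (∫ x in sl..RB, 1 * Mφ * ((n:ℝ) * x ^ (-(n:ℤ) - 1)))
            = (Mφ * (n:ℝ)) * ∫ x in sl..RB, x ^ (-(n:ℤ) - 1) := by
          rw [← intervalIntegral.integral_const_mul]
          apply intervalIntegral.integral_congr
          intro x _
          ring
        rw [hpull, integral_zpow (Or.inr ⟨hnZ, h0m⟩)]
        have he : (-(n:ℤ) - 1 + 1) = -(n:ℤ) := by ring
        rw [he]
        have hRBz : 0 ≤ RB ^ (-(n:ℤ)) := (zpow_pos hRBpos _).le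
        have hcast : ((-(n:ℤ) - 1 : ℤ) : ℝ) + 1 = -(n:ℝ) := by push_cast; ring
        rw [hcast]
        have hee : Mφ * (n:ℝ) * ((RB ^ (-(n:ℤ)) - sl ^ (-(n:ℤ))) / (-(n:ℝ)))
            = Mφ * (sl ^ (-(n:ℤ)) - RB ^ (-(n:ℤ))) := by
          field_simp
          ring
        rw [hee, ← hslν]
        nlinarith [hRBz, hMφ0]
      have hmul3p : ∀ x : ℝ, 0 < x →
          |((-(n:ℤ)) : ℝ) * x ^ (-(n:ℤ) - 1)| = (n:ℝ) * x ^ (-(n:ℤ) - 1) := by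
        intro x hxpos
        rw [abs_mul, habs_zpow, _root_.abs_of_pos hxpos]
        congr 1
        push_cast
        rw [abs_neg, Nat.abs_cast]
      have hrt : (∫ x in sl..RB, |p3 x|) ≤ Mφ * ν := by
        refine le_trans (intervalIntegral.integral_mono_on hslRB (hii _ _) hbint ?_) hzint
        intro x hx
        have hxpos : 0 < x := lt_of_lt_of_le hsl hx.1
        rw [hp3_def]
        exact mul3 _ _ _ _ _ _ (hχabs _) (hMφ _) (le_of_eq (hmul3p x hxpos))
      have hlt : (∫ x in (-RB)..(-sl), |p3 x|) ≤ Mφ * ν := by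
        have hcomp : (∫ x in (-RB)..(-sl), |p3 x|) = ∫ x in sl..RB, |p3 (-x)| := by
          exact (intervalIntegral.integral_comp_neg (a := sl) (b := RB) fun x => |p3 x|).symm
        rw [hcomp]
        refine le_trans (intervalIntegral.integral_mono_on hslRB
          ((cont_p3.comp continuous_neg).abs.intervalIntegrable _ _) hbint ?_) hzint
        intro x hx
        have hxpos : 0 < x := lt_of_lt_of_le hsl hx.1
        rw [hp3_def]
        simp only
        have h3' : |((-(n:ℤ)) : ℝ) * (-x) ^ (-(n:ℤ) - 1)| = (n:ℝ) * x ^ (-(n:ℤ) - 1) := by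
          rw [abs_mul, habs_zpow, _root_.abs_neg, _root_.abs_neg, _root_.abs_of_pos hxpos]
          congr 1
          push_cast
          rw [Nat.abs_cast]
        refine le_trans (le_of_eq ?_) (mul3 (χ (x ^ 2)) (φ (x ^ 2 / L))
          (((-(n:ℤ)) : ℝ) * (-x) ^ (-(n:ℤ) - 1)) 1 Mφ ((n:ℝ) * x ^ (-(n:ℤ) - 1))
          (hχabs _) (hMφ _) (le_of_eq h3'))
        rw [neg_sq]
      rw [hadd, hmid, hA3_def]
      linarith
  have hIbound : ∀ p q : ℝ, p ≤ q → (∫ x in p..q, |g' x|) ≤ (A1 + A2 + A3) * ν := by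
    intro p q hpq
    have hz1 : ∀ x : ℝ, RB ≤ |x| → |p1 x| = 0 := fun x hx => by
      rw [(hsuppp x hx).1, abs_zero]
    have hz2 : ∀ x : ℝ, RB ≤ |x| → |p2 x| = 0 := fun x hx => by
      rw [(hsuppp x hx).2.1, abs_zero]
    have hz3 : ∀ x : ℝ, RB ≤ |x| → |p3 x| = 0 := fun x hx => by
      rw [(hsuppp x hx).2.2, abs_zero]
    have int1 : Integrable (fun x => |p1 x|) := hcs _ cont_p1.abs hz1
    have int2 : Integrable (fun x => |p2 x|) := hcs _ cont_p2.abs hz2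
    have int3 : Integrable (fun x => |p3 x|) := hcs _ cont_p3.abs hz3
    have hintg' : Integrable (fun x => |g' x|) := by
      apply hcs _ hg'cont.abs
      intro x hx
      rw [hg'_def]
      simp only
      rw [(hsuppp x hx).1, (hsuppp x hx).2.1, (hsuppp x hx).2.2]
      simp
    have h1 : (∫ x in p..q, |g' x|) ≤ ∫ x : ℝ, |g' x| := by
      rw [intervalIntegral.integral_of_le hpq]
      exact setIntegral_le_integral hintg' (Filter.Eventually.of_forall fun x => abs_nonneg _)
    have h2 : (∫ x : ℝ, |g' x|) ≤ ∫ x : ℝ, (|p1 x| + |p2 x| + |p3 x|) := by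
      apply integral_mono hintg' ((int1.add int2).add int3)
      intro x
      rw [hg'_def]
      simp only
      refine le_trans (abs_add_le _ _) ?_
      exact add_le_add (abs_add_le _ _) le_rfl
    have h3 : (∫ x : ℝ, (|p1 x| + |p2 x| + |p3 x|))
        = (∫ x : ℝ, |p1 x|) + (∫ x : ℝ, |p2 x|) + ∫ x : ℝ, |p3 x| := by
      exact (integral_add (int1.add int2) int3).trans (by simp only [Pi.add_apply]; rw [integral_add int1 int2])
    have hB1' : (∫ x : ℝ, |p1 x|) ≤ A1 * ν := by
      refine le_trans hB1 (le_of_eq ?_)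
      rw [hA1_def]
      ring
    rw [h3] at h2
    linarith
  have key := vdc_abs g g' hd hg'cont t a RB (Mφ * ν) ((A1 + A2 + A3) * ν) ht hsupp hM hIbound
  refine le_trans (le_of_eq ?_) (le_trans key ?_)
  · simp only [ph, hg_def]
  · have hrp : (0:ℝ) ≤ |t| ^ (-(1:ℝ)/2) := Real.rpow_nonneg (abs_nonneg t) _
    have hC0 : (0:ℝ) ≤ 4 * (Mφ + (A1 + A2 + A3)) := by positivity
    have hprod : (0:ℝ) ≤ 4 * (Mφ + (A1 + A2 + A3)) * ν * (|t| ^ (-(1:ℝ)/2)) * (n:ℝ) :=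
      mul_nonneg (mul_nonneg (mul_nonneg hC0 hνpos.le) hrp) (Nat.cast_nonneg n)
    nlinarith [hprod]
end

section
/- Let g ∈ L¹(ℝ) satisfy ∫_ℝ (1+|η|) |g(η)| dη < ∞ and ∫_ℝ g(η) dη = 0. Define w(λ) = ∫_ℝ e^{iλη} g(η) dη and G(ξ) = i ∫_ξ^∞ g(η) dη. Then G ∈ L¹(ℝ), and for every λ ≠ 0 one has w(λ)/λ = ∫_ℝ e^{iλη} G(η) dη. -/
open MeasureTheory Set Complex

lemma norm_exp_Il (l x : ℝ) : ‖Complex.exp (Complex.I * l * x)‖ = 1 := by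
  have h : (Complex.I * l * x) = (l * x : ℝ) * Complex.I := by push_cast; ring
  rw [h, Complex.norm_exp_ofReal_mul_I]

lemma keyPos (g : ℝ → ℂ) (hm : Measurable g)
    (hgw : Integrable fun s : ℝ => |s| * ‖g s‖) :
    ∫⁻ ξ in Set.Ici (0:ℝ), ∫⁻ s in Set.Ioi ξ, (‖g s‖₊ : ENNReal) < ⊤ := by
  have hmeas : Measurable (Function.uncurry fun ξ s : ℝ =>
      if ξ < s then (‖g s‖₊ : ENNReal) else 0) := by
    exact Measurable.ite (measurableSet_lt measurable_fst measurable_snd)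
      (hm.comp measurable_snd).enorm measurable_const
  have h1 : ∀ ξ : ℝ, (∫⁻ s in Set.Ioi ξ, (‖g s‖₊ : ENNReal))
      = ∫⁻ s, (if ξ < s then (‖g s‖₊ : ENNReal) else 0) := by
    intro ξ
    rw [← lintegral_indicator measurableSet_Ioi]
    congr 1
  have h2 : (∫⁻ ξ in Set.Ici (0:ℝ), ∫⁻ s in Set.Ioi ξ, (‖g s‖₊ : ENNReal))
      = ∫⁻ s, ∫⁻ ξ in Set.Ici (0:ℝ), (if ξ < s then (‖g s‖₊ : ENNReal) else 0) := by
    simp_rw [h1]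
    exact lintegral_lintegral_swap hmeas.aemeasurable
  rw [h2]
  have h3 : ∀ s : ℝ, (∫⁻ ξ in Set.Ici (0:ℝ), (if ξ < s then (‖g s‖₊ : ENNReal) else 0))
      = (‖g s‖₊ : ENNReal) * ENNReal.ofReal (s - 0) := by
    intro s
    have : (fun ξ : ℝ => if ξ < s then (‖g s‖₊ : ENNReal) else 0)
        = (Set.Iio s).indicator (fun _ => (‖g s‖₊ : ENNReal)) := by
      funext ξ; simp [Set.indicator_apply, Set.mem_Iio]
    rw [this, lintegral_indicator measurableSet_Iio, Measure.restrict_restrict measurableSet_Iio,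
      lintegral_const, Measure.restrict_apply_univ, Set.inter_comm, Set.Ici_inter_Iio,
      Real.volume_Ico]
  simp_rw [h3]
  have h4 : (∫⁻ s : ℝ, (‖g s‖₊ : ENNReal) * ENNReal.ofReal (s - 0))
      ≤ ∫⁻ s : ℝ, (‖(|s| * ‖g s‖)‖₊ : ENNReal) := by
    refine lintegral_mono fun s => ?_
    rw [nnnorm_mul, ENNReal.coe_mul, Real.nnnorm_abs, nnnorm_norm,
      ← Real.nnnorm_abs s, ← enorm_eq_nnnorm |s|, Real.enorm_eq_ofReal (abs_nonneg _), mul_comm]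
    exact mul_le_mul_left (ENNReal.ofReal_le_ofReal (by simpa using le_abs_self s)) _
  exact lt_of_le_of_lt h4 hgw.2

lemma keyNeg (g : ℝ → ℂ) (hm : Measurable g)
    (hgw : Integrable fun s : ℝ => |s| * ‖g s‖) :
    ∫⁻ ξ in Set.Iio (0:ℝ), ∫⁻ s in Set.Iic ξ, (‖g s‖₊ : ENNReal) < ⊤ := by
  have hmeas : Measurable (Function.uncurry fun ξ s : ℝ =>
      if s ≤ ξ then (‖g s‖₊ : ENNReal) else 0) := by
    exact Measurable.ite (measurableSet_le measurable_snd measurable_fst)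
      (hm.comp measurable_snd).enorm measurable_const
  have h1 : ∀ ξ : ℝ, (∫⁻ s in Set.Iic ξ, (‖g s‖₊ : ENNReal))
      = ∫⁻ s, (if s ≤ ξ then (‖g s‖₊ : ENNReal) else 0) := by
    intro ξ
    rw [← lintegral_indicator measurableSet_Iic]
    congr 1
  have h2 : (∫⁻ ξ in Set.Iio (0:ℝ), ∫⁻ s in Set.Iic ξ, (‖g s‖₊ : ENNReal))
      = ∫⁻ s, ∫⁻ ξ in Set.Iio (0:ℝ), (if s ≤ ξ then (‖g s‖₊ : ENNReal) else 0) := by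
    simp_rw [h1]
    exact lintegral_lintegral_swap hmeas.aemeasurable
  rw [h2]
  have h3 : ∀ s : ℝ, (∫⁻ ξ in Set.Iio (0:ℝ), (if s ≤ ξ then (‖g s‖₊ : ENNReal) else 0))
      = (‖g s‖₊ : ENNReal) * ENNReal.ofReal (0 - s) := by
    intro s
    have : (fun ξ : ℝ => if s ≤ ξ then (‖g s‖₊ : ENNReal) else 0)
        = (Set.Ici s).indicator (fun _ => (‖g s‖₊ : ENNReal)) := by
      funext ξ; simp [Set.indicator_apply, Set.mem_Ici]
    rw [this, lintegral_indicator measurableSet_Ici, Measure.restrict_restrict measurableSet_Ici,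
      lintegral_const, Measure.restrict_apply_univ, Set.Ici_inter_Iio, Real.volume_Ico]
  simp_rw [h3]
  have h4 : (∫⁻ s : ℝ, (‖g s‖₊ : ENNReal) * ENNReal.ofReal (0 - s))
      ≤ ∫⁻ s : ℝ, (‖(|s| * ‖g s‖)‖₊ : ENNReal) := by
    refine lintegral_mono fun s => ?_
    rw [nnnorm_mul, ENNReal.coe_mul, Real.nnnorm_abs, nnnorm_norm,
      ← Real.nnnorm_abs s, ← enorm_eq_nnnorm |s|, Real.enorm_eq_ofReal (abs_nonneg _), mul_comm]
    exact mul_le_mul_left (ENNReal.ofReal_le_ofReal (by simpa using neg_le_abs s)) _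
  exact lt_of_le_of_lt h4 hgw.2

lemma aux_stmt3 (g : ℝ → ℂ) (hm : Measurable g) (hg : Integrable g)
    (hgw : Integrable fun s : ℝ => |s| * ‖g s‖)
    (hg0 : (∫ η : ℝ, g η) = 0) (l : ℝ) (hl : l ≠ 0) :
    Integrable (fun ξ : ℝ => Complex.I * ∫ η in Set.Ioi ξ, g η) ∧
      (∫ η : ℝ, Complex.exp (Complex.I * l * η) * g η) / (l : ℂ) =
        ∫ η : ℝ, Complex.exp (Complex.I * l * η) *
          (Complex.I * ∫ s in Set.Ioi η, g s) := by
  set F : ℝ → ℂ := fun ξ => ∫ η in Set.Ioi ξ, g η with hF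
  have hFneg : ∀ ξ : ℝ, F ξ = -∫ η in Set.Iic ξ, g η := by
    intro ξ
    have h1 := integral_add_compl (measurableSet_Iic (a := ξ)) hg (f := g)
    rw [Set.compl_Iic, hg0] at h1
    simp only [hF]
    linear_combination h1
  have hkey : ∀ ξ : ℝ, F ξ = (∫ η, g η) - ((∫ η in Set.Iic 0, g η) + ∫ η in (0:ℝ)..ξ, g η) := by
    intro ξ
    have h1 := integral_add_compl measurableSet_Iic hg (f := g) (s := Set.Iic ξ)
    rw [Set.compl_Iic] at h1
    have h2 := intervalIntegral.integral_Iic_sub_Iic (hg.integrableOn) (hg.integrableOn)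
      (a := (0:ℝ)) (b := ξ) (μ := volume)
    have : F ξ = ∫ η in Set.Ioi ξ, g η := rfl
    rw [this]
    linear_combination h1 - h2
  have hFc : Continuous F := by
    rw [show F = fun ξ => (∫ η, g η) - ((∫ η in Set.Iic 0, g η) + ∫ η in (0:ℝ)..ξ, g η)
      from funext hkey]
    exact continuous_const.sub (continuous_const.add (hg.continuous_primitive 0))

  -- Part 1
  have hb1 : ∀ ξ : ℝ, (‖F ξ‖₊ : ENNReal) ≤ ∫⁻ s in Set.Ioi ξ, (‖g s‖₊ : ENNReal) := by
    intro ξ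
    calc (‖F ξ‖₊ : ENNReal) = ENNReal.ofReal ‖F ξ‖ := (ofReal_norm _).symm
      _ ≤ ENNReal.ofReal (∫ s in Set.Ioi ξ, ‖g s‖) :=
          ENNReal.ofReal_le_ofReal (norm_integral_le_integral_norm _)
      _ = ∫⁻ s in Set.Ioi ξ, (‖g s‖₊ : ENNReal) :=
          ofReal_integral_norm_eq_lintegral_enorm hg.integrableOn
  have hb2 : ∀ ξ : ℝ, (‖F ξ‖₊ : ENNReal) ≤ ∫⁻ s in Set.Iic ξ, (‖g s‖₊ : ENNReal) := by
    intro ξ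
    rw [hFneg ξ, nnnorm_neg]
    calc (‖∫ η in Set.Iic ξ, g η‖₊ : ENNReal)
        = ENNReal.ofReal ‖∫ η in Set.Iic ξ, g η‖ := (ofReal_norm _).symm
      _ ≤ ENNReal.ofReal (∫ s in Set.Iic ξ, ‖g s‖) :=
          ENNReal.ofReal_le_ofReal (norm_integral_le_integral_norm _)
      _ = ∫⁻ s in Set.Iic ξ, (‖g s‖₊ : ENNReal) :=
          ofReal_integral_norm_eq_lintegral_enorm hg.integrableOn
  have part1 : Integrable (fun ξ : ℝ => Complex.I * F ξ) := by
    refine ⟨(continuous_const.mul hFc).aestronglyMeasurable, ?_⟩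
    show (∫⁻ ξ, (‖Complex.I * F ξ‖₊ : ENNReal)) < ⊤
    have : (∫⁻ ξ, (‖Complex.I * F ξ‖₊ : ENNReal)) = ∫⁻ ξ, (‖F ξ‖₊ : ENNReal) := by
      congr 1; funext ξ; simp [nnnorm_mul]
    rw [this, ← lintegral_add_compl _ measurableSet_Ici (μ := volume), Set.compl_Ici]
    refine ENNReal.add_lt_top.mpr ⟨?_, ?_⟩
    · exact lt_of_le_of_lt (lintegral_mono fun ξ => hb1 ξ) (keyPos g hm hgw)
    · exact lt_of_le_of_lt (lintegral_mono fun ξ => hb2 ξ) (keyNeg g hm hgw)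

  -- Part 2 setup
  have hcl : (Complex.I * (l:ℂ)) ≠ 0 :=
    mul_ne_zero Complex.I_ne_zero (Complex.ofReal_ne_zero.mpr hl)
  have hexp_cont : Continuous fun x : ℝ => Complex.exp (Complex.I * l * x) :=
    Complex.continuous_exp.comp (continuous_const.mul Complex.continuous_ofReal)
  have hnne : ∀ x : ℝ, ‖Complex.exp (Complex.I * l * x)‖₊ = 1 := by
    intro x
    ext
    simp [coe_nnnorm, norm_exp_Il l x]
  -- product integrability, positive side
  have hprod_pos : Integrable (Function.uncurry fun η s : ℝ =>
      if η < s then Complex.exp (Complex.I * l * η) * g s else 0)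
      ((volume.restrict (Set.Ici 0)).prod volume) := by
    have hmeas : Measurable (Function.uncurry fun η s : ℝ =>
        if η < s then Complex.exp (Complex.I * l * η) * g s else 0) := by
      exact Measurable.ite (measurableSet_lt measurable_fst measurable_snd)
        (((Complex.continuous_exp.comp
            (continuous_const.mul (Complex.continuous_ofReal.comp continuous_fst))).measurable).mul
          (hm.comp measurable_snd)) measurable_const
    refine ⟨hmeas.aestronglyMeasurable, ?_⟩
    show (∫⁻ p, ‖_‖ₑ ∂_) < ⊤
    rw [lintegral_prod _ hmeas.enorm.aemeasurable]
    have hb : ∀ η s : ℝ,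
        (‖(if η < s then Complex.exp (Complex.I * l * η) * g s else 0 : ℂ)‖₊ : ENNReal)
          ≤ (Set.Ioi η).indicator (fun s => (‖g s‖₊ : ENNReal)) s := by
      intro η s
      by_cases h : η < s
      · simp only [h, if_true, Set.indicator_apply, Set.mem_Ioi]
        rw [nnnorm_mul, hnne, one_mul]
      · simp [Set.indicator_apply, Set.mem_Ioi, h]
    calc (∫⁻ η in Set.Ici (0:ℝ), ∫⁻ s, (‖(if η < s then
            Complex.exp (Complex.I * l * η) * g s else 0 : ℂ)‖₊ : ENNReal))
        ≤ ∫⁻ η in Set.Ici (0:ℝ), ∫⁻ s, (Set.Ioi η).indicator (fun s => (‖g s‖₊ : ENNReal)) s :=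
          lintegral_mono fun η => lintegral_mono fun s => hb η s
      _ = ∫⁻ η in Set.Ici (0:ℝ), ∫⁻ s in Set.Ioi η, (‖g s‖₊ : ENNReal) := by
          simp_rw [lintegral_indicator measurableSet_Ioi]
      _ < ⊤ := keyPos g hm hgw

  -- product integrability, negative side
  have hprod_neg : Integrable (Function.uncurry fun η s : ℝ =>
      if s ≤ η then Complex.exp (Complex.I * l * η) * g s else 0)
      ((volume.restrict (Set.Iio 0)).prod volume) := by
    have hmeas : Measurable (Function.uncurry fun η s : ℝ =>
        if s ≤ η then Complex.exp (Complex.I * l * η) * g s else 0) := by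
      exact Measurable.ite (measurableSet_le measurable_snd measurable_fst)
        (((Complex.continuous_exp.comp
            (continuous_const.mul (Complex.continuous_ofReal.comp continuous_fst))).measurable).mul
          (hm.comp measurable_snd)) measurable_const
    refine ⟨hmeas.aestronglyMeasurable, ?_⟩
    show (∫⁻ p, ‖_‖ₑ ∂_) < ⊤
    rw [lintegral_prod _ hmeas.enorm.aemeasurable]
    have hb : ∀ η s : ℝ,
        (‖(if s ≤ η then Complex.exp (Complex.I * l * η) * g s else 0 : ℂ)‖₊ : ENNReal)
          ≤ (Set.Iic η).indicator (fun s => (‖g s‖₊ : ENNReal)) s := by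
      intro η s
      by_cases h : s ≤ η
      · simp only [h, if_true, Set.indicator_apply, Set.mem_Iic]
        rw [nnnorm_mul, hnne, one_mul]
      · simp [Set.indicator_apply, Set.mem_Iic, h]
    calc (∫⁻ η in Set.Iio (0:ℝ), ∫⁻ s, (‖(if s ≤ η then
            Complex.exp (Complex.I * l * η) * g s else 0 : ℂ)‖₊ : ENNReal))
        ≤ ∫⁻ η in Set.Iio (0:ℝ), ∫⁻ s, (Set.Iic η).indicator (fun s => (‖g s‖₊ : ENNReal)) s :=
          lintegral_mono fun η => lintegral_mono fun s => hb η s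
      _ = ∫⁻ η in Set.Iio (0:ℝ), ∫⁻ s in Set.Iic η, (‖g s‖₊ : ENNReal) := by
          simp_rw [lintegral_indicator measurableSet_Iic]
      _ < ⊤ := keyNeg g hm hgw

  -- positive part value
  have hP : (∫ η in Set.Ici (0:ℝ), Complex.exp (Complex.I * l * η) * (Complex.I * F η))
      = Complex.I * ∫ s : ℝ, (if 0 ≤ s then
          (Complex.exp (Complex.I * l * s) - 1) / (Complex.I * l) else 0) * g s := by
    have e1 : ∀ η : ℝ, Complex.exp (Complex.I * l * η) * (Complex.I * F η)
        = Complex.I * ∫ s : ℝ, (if η < s then Complex.exp (Complex.I * l * η) * g s else 0) := by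
      intro η
      have hind : (fun s : ℝ => if η < s then Complex.exp (Complex.I * l * η) * g s else 0)
          = (Set.Ioi η).indicator (fun s => Complex.exp (Complex.I * l * η) * g s) := by
        funext s; simp [Set.indicator_apply, Set.mem_Ioi]
      rw [hind, integral_indicator measurableSet_Ioi, integral_const_mul]
      simp only [hF]
      ring
    simp_rw [e1]
    rw [integral_const_mul, integral_integral_swap hprod_pos]
    congr 1
    refine integral_congr_ae (Filter.Eventually.of_forall fun s => ?_)
    show (∫ η in Set.Ici (0:ℝ), (if η < s then Complex.exp (Complex.I * l * η) * g s else 0))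
        = (if 0 ≤ s then (Complex.exp (Complex.I * l * s) - 1) / (Complex.I * l) else 0) * g s
    have hind : (fun η : ℝ => if η < s then Complex.exp (Complex.I * l * η) * g s else 0)
        = (Set.Iio s).indicator (fun η => Complex.exp (Complex.I * l * η) * g s) := by
      funext η; simp [Set.indicator_apply, Set.mem_Iio]
    rw [hind, setIntegral_indicator measurableSet_Iio, Set.Ici_inter_Iio, integral_mul_const]
    congr 1
    by_cases hs : (0:ℝ) ≤ s
    · rw [if_pos hs, setIntegral_congr_set Ico_ae_eq_Ioc,
        ← intervalIntegral.integral_of_le hs, integral_exp_mul_complex hcl]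
      norm_num
    · rw [if_neg hs, Set.Ico_eq_empty (fun h => hs h.le)]
      simp

  -- negative part value
  have hN : (∫ η in Set.Iio (0:ℝ), Complex.exp (Complex.I * l * η) * (Complex.I * F η))
      = -Complex.I * ∫ s : ℝ, (if s ≤ 0 then
          (1 - Complex.exp (Complex.I * l * s)) / (Complex.I * l) else 0) * g s := by
    have e1 : ∀ η : ℝ, Complex.exp (Complex.I * l * η) * (Complex.I * F η)
        = -Complex.I * ∫ s : ℝ, (if s ≤ η then Complex.exp (Complex.I * l * η) * g s else 0) := by
      intro η
      have hind : (fun s : ℝ => if s ≤ η then Complex.exp (Complex.I * l * η) * g s else 0)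
          = (Set.Iic η).indicator (fun s => Complex.exp (Complex.I * l * η) * g s) := by
        funext s; simp [Set.indicator_apply, Set.mem_Iic]
      rw [hind, integral_indicator measurableSet_Iic, integral_const_mul, hFneg η]
      ring
    simp_rw [e1]
    rw [integral_const_mul, integral_integral_swap hprod_neg]
    congr 1
    refine integral_congr_ae (Filter.Eventually.of_forall fun s => ?_)
    show (∫ η in Set.Iio (0:ℝ), (if s ≤ η then Complex.exp (Complex.I * l * η) * g s else 0))
        = (if s ≤ 0 then (1 - Complex.exp (Complex.I * l * s)) / (Complex.I * l) else 0) * g s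
    have hind : (fun η : ℝ => if s ≤ η then Complex.exp (Complex.I * l * η) * g s else 0)
        = (Set.Ici s).indicator (fun η => Complex.exp (Complex.I * l * η) * g s) := by
      funext η; simp [Set.indicator_apply, Set.mem_Ici]
    rw [hind, setIntegral_indicator measurableSet_Ici, Set.inter_comm, Set.Ici_inter_Iio,
      integral_mul_const]
    congr 1
    by_cases hs : s ≤ (0:ℝ)
    · rw [if_pos hs, setIntegral_congr_set Ico_ae_eq_Ioc,
        ← intervalIntegral.integral_of_le hs, integral_exp_mul_complex hcl]
      norm_num
    · rw [if_neg hs, Set.Ico_eq_empty (fun h => hs h.le)]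
      simp

  -- final assembly
  refine ⟨part1, ?_⟩
  have hInt1 : Integrable (fun s : ℝ => Complex.exp (Complex.I * l * s) * g s) :=
    hg.bdd_mul hexp_cont.aestronglyMeasurable (c := 1) (Filter.Eventually.of_forall fun x => le_of_eq (norm_exp_Il l x))
  have hIntexpF : Integrable (fun η : ℝ => Complex.exp (Complex.I * l * η) * (Complex.I * F η)) :=
    part1.bdd_mul hexp_cont.aestronglyMeasurable (c := 1) (Filter.Eventually.of_forall fun x => le_of_eq (norm_exp_Il l x))
  have hsplit := integral_add_compl (measurableSet_Ici (a := (0:ℝ))) hIntexpF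
  rw [Set.compl_Ici] at hsplit
  have hnc : ‖Complex.I * (l:ℂ)‖ ≠ 0 := norm_ne_zero_iff.mpr hcl
  have hIap : Integrable (fun s : ℝ => (if 0 ≤ s then
      (Complex.exp (Complex.I * l * s) - 1) / (Complex.I * l) else 0) * g s) := by
    refine hg.bdd_mul ?_ (c := 2 / ‖Complex.I * (l:ℂ)‖) (Filter.Eventually.of_forall fun x => ?_)
    · refine (Measurable.ite (measurableSet_le measurable_const measurable_id)
        ?_ measurable_const).aestronglyMeasurable
      exact (((Complex.continuous_exp.comp
        (continuous_const.mul Complex.continuous_ofReal)).sub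
          continuous_const).div_const _).measurable
    · by_cases hx : (0:ℝ) ≤ x
      · rw [if_pos hx, norm_div]
        gcongr
        exact (norm_sub_le _ _).trans (by rw [norm_exp_Il]; norm_num)
      · rw [if_neg hx, norm_zero]
        positivity
  have hIan : Integrable (fun s : ℝ => (if s ≤ 0 then
      (1 - Complex.exp (Complex.I * l * s)) / (Complex.I * l) else 0) * g s) := by
    refine hg.bdd_mul ?_ (c := 2 / ‖Complex.I * (l:ℂ)‖) (Filter.Eventually.of_forall fun x => ?_)
    · refine (Measurable.ite (measurableSet_le measurable_id measurable_const)
        ?_ measurable_const).aestronglyMeasurable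
      exact ((continuous_const.sub (Complex.continuous_exp.comp
        (continuous_const.mul Complex.continuous_ofReal))).div_const _).measurable
    · by_cases hx : x ≤ (0:ℝ)
      · rw [if_pos hx, norm_div]
        gcongr
        exact (norm_sub_le _ _).trans (by rw [norm_exp_Il]; norm_num)
      · rw [if_neg hx, norm_zero]
        positivity
  rw [← hsplit, hP, hN]
  have hcomb : Complex.I * (∫ s : ℝ, (if 0 ≤ s then
        (Complex.exp (Complex.I * l * s) - 1) / (Complex.I * l) else 0) * g s)
      + -Complex.I * (∫ s : ℝ, (if s ≤ 0 then
        (1 - Complex.exp (Complex.I * l * s)) / (Complex.I * l) else 0) * g s)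
      = Complex.I * ((Complex.I * l)⁻¹ *
          ((∫ s : ℝ, Complex.exp (Complex.I * l * s) * g s) - ∫ s : ℝ, g s)) := by
    have h1 : Complex.I * (∫ s : ℝ, (if 0 ≤ s then
          (Complex.exp (Complex.I * l * s) - 1) / (Complex.I * l) else 0) * g s)
        + -Complex.I * (∫ s : ℝ, (if s ≤ 0 then
          (1 - Complex.exp (Complex.I * l * s)) / (Complex.I * l) else 0) * g s)
        = Complex.I * ((∫ s : ℝ, (if 0 ≤ s then
            (Complex.exp (Complex.I * l * s) - 1) / (Complex.I * l) else 0) * g s)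
          - ∫ s : ℝ, (if s ≤ 0 then
            (1 - Complex.exp (Complex.I * l * s)) / (Complex.I * l) else 0) * g s) := by ring
    rw [h1, ← integral_sub hIap hIan]
    congr 1
    rw [← integral_sub hInt1 hg, ← integral_const_mul]
    refine integral_congr_ae (Filter.Eventually.of_forall fun s => ?_)
    show (if 0 ≤ s then (Complex.exp (Complex.I * l * s) - 1) / (Complex.I * l) else 0) * g s
        - (if s ≤ 0 then (1 - Complex.exp (Complex.I * l * s)) / (Complex.I * l) else 0) * g s
      = (Complex.I * l)⁻¹ * (Complex.exp (Complex.I * l * s) * g s - g s)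
    rcases lt_trichotomy s 0 with h|h|h
    · rw [if_neg (not_le.mpr h), if_pos h.le]; ring
    · subst h
      norm_num [Complex.exp_zero]
    · rw [if_pos h.le, if_neg (not_le.mpr h)]; ring
  rw [hcomb, hg0, sub_zero]
  field_simp [Complex.ofReal_ne_zero.mpr hl, Complex.I_ne_zero]

theorem stmt_3 (g : ℝ → ℂ) (hg : Integrable g)
    (hg1 : Integrable (fun η : ℝ => (1 + |η|) * ‖g η‖))
    (hg0 : (∫ η : ℝ, g η) = 0) :
    Integrable (fun ξ : ℝ => Complex.I * ∫ η in Set.Ioi ξ, g η) ∧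
    ∀ l : ℝ, l ≠ 0 →
      (∫ η : ℝ, Complex.exp (Complex.I * l * η) * g η) / (l : ℂ) =
        ∫ η : ℝ, Complex.exp (Complex.I * l * η) *
          (Complex.I * ∫ s in Set.Ioi η, g s) := by
  set G : ℝ → ℂ := hg.1.mk g with hGdef
  have hGm : Measurable G := hg.1.stronglyMeasurable_mk.measurable
  have hGe : g =ᵐ[volume] G := hg.1.ae_eq_mk
  have hg' : Integrable G := hg.congr hGe
  have hgw : Integrable fun s : ℝ => |s| * ‖g s‖ := by
    refine (hg1.sub hg.norm).congr (Filter.Eventually.of_forall fun s => ?_)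
    simp only [Pi.sub_apply]
    ring
  have hgw' : Integrable fun s : ℝ => |s| * ‖G s‖ :=
    hgw.congr (hGe.mono fun s hs => by simp only [hs])
  have hg0' : (∫ η : ℝ, G η) = 0 := by rw [← integral_congr_ae hGe, hg0]
  have hFeq : ∀ ξ : ℝ, (∫ η in Set.Ioi ξ, g η) = ∫ η in Set.Ioi ξ, G η :=
    fun ξ => integral_congr_ae (ae_restrict_of_ae hGe)
  constructor
  · exact ((aux_stmt3 G hGm hg' hgw' hg0' 1 one_ne_zero).1).congr
      (Filter.Eventually.of_forall fun ξ => by simp only [hFeq ξ])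
  · intro l hl
    have e1 : (∫ η : ℝ, Complex.exp (Complex.I * l * η) * g η)
        = ∫ η : ℝ, Complex.exp (Complex.I * l * η) * G η :=
      integral_congr_ae (hGe.mono fun η hη => by simp only [hη])
    have e2 : (∫ η : ℝ, Complex.exp (Complex.I * l * η) *
          (Complex.I * ∫ s in Set.Ioi η, g s))
        = ∫ η : ℝ, Complex.exp (Complex.I * l * η) *
          (Complex.I * ∫ s in Set.Ioi η, G s) := by
      refine integral_congr_ae (Filter.Eventually.of_forall fun η => ?_)
      simp only [hFeq η]
    rw [e1, e2]
    exact (aux_stmt3 G hGm hg' hgw' hg0' l hl).2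
end

section
/- Let k ≥ 1 be an integer and let V : ℝ³ → ℂ be measurable with finite Kato norm ‖V‖_K. Then sup over x₀, x_{k+1} ∈ ℝ³ of ∫_{ℝ^{3k}} [ ∏_{j=1}^k |V(x_j)| / ∏_{j=0}^k |x_j − x_{j+1}| ] · ( ∑_{ℓ=0}^k |x_ℓ − x_{ℓ+1}| ) dx₁ … dx_k ≤ (k+1) ‖V‖_K^k. -/
open MeasureTheory

noncomputable section

abbrev E3 : Type := EuclideanSpace ℝ (Fin 3)

/-- The chain `x₀, x₁, …, x_k, x_{k+1}` built from the endpoints `x₀, x_{k+1}`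
and the interior points `xs 0, …, xs (k-1)`. -/
def chain {k : ℕ} (x0 xk1 : E3) (xs : Fin k → E3) : Fin (k + 2) → E3 :=
  Fin.snoc (Fin.cons x0 xs) xk1

lemma chain_zero {k : ℕ} (x0 xk1 : E3) (xs : Fin k → E3) : chain x0 xk1 xs 0 = x0 := by
  unfold chain
  rw [show (0 : Fin (k+2)) = Fin.castSucc 0 by simp, Fin.snoc_castSucc, Fin.cons_zero]

lemma chain_cons {k : ℕ} (x0 xk1 x : E3) (rest : Fin k → E3) (i : Fin (k+2)) :
    chain x0 xk1 (Fin.cons x rest) i.succ = chain x xk1 rest i := by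
  unfold chain
  induction i using Fin.lastCases with
  | last => rw [Fin.succ_last, Fin.snoc_last, Fin.snoc_last]
  | cast m => rw [Fin.succ_castSucc, Fin.snoc_castSucc, Fin.snoc_castSucc, Fin.cons_succ]

lemma chain_pos {k : ℕ} (a b xk1 : E3) (rest : Fin k → E3) (i : Fin (k+1)) :
    chain a xk1 rest i.succ = chain b xk1 rest i.succ := by
  unfold chain
  induction i using Fin.lastCases with
  | last => rw [Fin.succ_last, Fin.snoc_last, Fin.snoc_last]
  | cast m =>
      rw [Fin.succ_castSucc, Fin.snoc_castSucc, Fin.snoc_castSucc, Fin.cons_succ, Fin.cons_succ]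

lemma measurable_chain {k : ℕ} (x0 xk1 : E3) (i : Fin (k+2)) :
    Measurable (fun xs : Fin k → E3 => chain x0 xk1 xs i) := by
  unfold chain
  induction i using Fin.lastCases with
  | last => simp only [Fin.snoc_last]; exact measurable_const
  | cast m =>
    simp only [Fin.snoc_castSucc]
    induction m using Fin.cases with
    | zero => simp only [Fin.cons_zero]; exact measurable_const
    | succ j => simp only [Fin.cons_succ]; exact measurable_pi_apply j

lemma measurable_prodInt {k : ℕ} (V : E3 → ℂ) (hV : Measurable V) (x0 xk1 : E3)
    (f g : Fin k → Fin (k+2)) :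
    Measurable (fun xs : Fin k → E3 => ∏ j : Fin k,
      ENNReal.ofReal (‖V (xs j)‖ /
        dist (chain x0 xk1 xs (f j)) (chain x0 xk1 xs (g j)))) := by
  apply Finset.measurable_prod
  intro j _
  exact ((hV.norm.comp (measurable_pi_apply j)).div
    ((measurable_chain x0 xk1 (f j)).dist (measurable_chain x0 xk1 (g j)))).ennreal_ofReal

lemma measurable_cons_pair {k : ℕ} :
    Measurable (fun p : E3 × (Fin k → E3) => (Fin.cons p.1 p.2 : Fin (k+1) → E3)) := by
  apply measurable_pi_iff.2
  intro i
  induction i using Fin.cases with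
  | zero => simp only [Fin.cons_zero]; exact measurable_fst
  | succ j => simp only [Fin.cons_succ]; exact (measurable_pi_apply j).comp measurable_snd

lemma lintegral_pi_cons_aux {k : ℕ} (F : (Fin (k+1) → E3) → ENNReal) :
    ∫⁻ xs : Fin (k+1) → E3, F xs
      = ∫⁻ p : E3 × (Fin k → E3), F (Fin.cons p.1 p.2)
          ∂((volume : Measure E3).prod (volume : Measure (Fin k → E3))) := by
  have hmp := MeasureTheory.measurePreserving_piFinSuccAbove
    (fun _ : Fin (k+1) => (volume : Measure E3)) 0
  have hmap : (volume : Measure (Fin (k+1) → E3)).map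
      (⇑(MeasurableEquiv.piFinSuccAbove (fun _ : Fin (k+1) => E3) 0))
      = (volume : Measure E3).prod (volume : Measure (Fin k → E3)) := hmp.map_eq
  rw [← hmap, lintegral_map_equiv]
  refine lintegral_congr fun xs => ?_
  congr 1
  have : (MeasurableEquiv.piFinSuccAbove (fun _ : Fin (k+1) => E3) 0) xs
      = (xs 0, fun j : Fin k => xs ((0 : Fin (k+1)).succAbove j)) := rfl
  rw [this]
  simp only [Fin.zero_succAbove]
  exact (Fin.cons_self_tail xs).symm

lemma lintegral_pi_cons {k : ℕ} (F : (Fin (k+1) → E3) → ENNReal) (hF : Measurable F) :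
    ∫⁻ xs : Fin (k+1) → E3, F xs
      = ∫⁻ x : E3, ∫⁻ rest : Fin k → E3, F (Fin.cons x rest) := by
  rw [lintegral_pi_cons_aux F,
    lintegral_prod (fun p : E3 × (Fin k → E3) => F (Fin.cons p.1 p.2))
      ((hF.comp measurable_cons_pair).aemeasurable)]

lemma lintegral_pi_cons' {k : ℕ} (F : (Fin (k+1) → E3) → ENNReal) (hF : Measurable F) :
    ∫⁻ xs : Fin (k+1) → E3, F xs
      = ∫⁻ rest : Fin k → E3, ∫⁻ x : E3, F (Fin.cons x rest) := by
  rw [lintegral_pi_cons_aux F,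
    lintegral_prod_symm (fun p : E3 × (Fin k → E3) => F (Fin.cons p.1 p.2))
      ((hF.comp measurable_cons_pair).aemeasurable)]

lemma main_bound (V : E3 → ℂ) (hV : Measurable V) (M : ℝ)
    (hM : ∀ x : E3,
      (∫⁻ y : E3, ENNReal.ofReal (‖V y‖ / dist x y)) ≤ ENNReal.ofReal M) :
    ∀ (k : ℕ) (x0 xk1 : E3) (ℓ : Fin (k+1)),
      (∫⁻ xs : Fin k → E3, ∏ j : Fin k,
        ENNReal.ofReal (‖V (xs j)‖ /
          dist (chain x0 xk1 xs (ℓ.succAbove j).castSucc)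
               (chain x0 xk1 xs (ℓ.succAbove j).succ)))
        ≤ (ENNReal.ofReal M) ^ k := by
  intro k
  induction k with
  | zero =>
    intro x0 xk1 ℓ
    simp only [Finset.univ_eq_empty, Finset.prod_empty, pow_zero, lintegral_one]
    show Measure.pi (fun _ : Fin 0 => (volume : Measure E3)) Set.univ ≤ 1
    rw [Measure.pi_univ]
    simp
  | succ k ih =>
    intro x0 xk1 ℓ
    induction ℓ using Fin.cases with
    | zero =>
      have hFmeas := measurable_prodInt V hV x0 xk1
        (fun j : Fin (k+1) => (Fin.succAbove 0 j).castSucc)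
        (fun j : Fin (k+1) => (Fin.succAbove 0 j).succ)
      rw [lintegral_pi_cons' _ hFmeas]
      have hrw : ∀ (rest : Fin k → E3) (x : E3),
          (∏ j : Fin (k+1), ENNReal.ofReal (‖V ((Fin.cons x rest : Fin (k+1) → E3) j)‖ /
            dist (chain x0 xk1 (Fin.cons x rest) ((Fin.succAbove 0 j).castSucc))
                 (chain x0 xk1 (Fin.cons x rest) ((Fin.succAbove 0 j).succ))))
          = (∏ i : Fin k, ENNReal.ofReal (‖V (rest i)‖ /
              dist (chain x0 xk1 rest ((Fin.succAbove 0 i).castSucc))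
                   (chain x0 xk1 rest ((Fin.succAbove 0 i).succ))))
            * ENNReal.ofReal (‖V x‖ /
                dist (chain x0 xk1 rest ((0 : Fin (k+1)).succ)) x) := by
        intro rest x
        rw [Fin.prod_univ_succ, mul_comm]
        congr 1
        · apply Finset.prod_congr rfl
          intro i _
          have e1 : chain x0 xk1 (Fin.cons x rest) ((Fin.succAbove 0 i.succ).castSucc)
              = chain x0 xk1 rest ((Fin.succAbove 0 i).castSucc) := by
            rw [Fin.zero_succAbove, Fin.zero_succAbove, ← Fin.succ_castSucc, chain_cons,
              ← Fin.succ_castSucc, chain_pos x x0, Fin.succ_castSucc]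
          have e2 : chain x0 xk1 (Fin.cons x rest) ((Fin.succAbove 0 i.succ).succ)
              = chain x0 xk1 rest ((Fin.succAbove 0 i).succ) := by
            rw [Fin.zero_succAbove, Fin.zero_succAbove, chain_cons, chain_pos x x0]
          rw [Fin.cons_succ, e1, e2]
        · have e3 : chain x0 xk1 (Fin.cons x rest)
              ((Fin.succAbove 0 (0 : Fin (k+1))).castSucc) = x := by
            rw [Fin.zero_succAbove, ← Fin.succ_castSucc, chain_cons, Fin.castSucc_zero,
              chain_zero]
          have e4 : chain x0 xk1 (Fin.cons x rest)
              ((Fin.succAbove 0 (0 : Fin (k+1))).succ)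
              = chain x0 xk1 rest ((0 : Fin (k+1)).succ) := by
            rw [Fin.zero_succAbove, chain_cons, chain_pos x x0]
          rw [Fin.cons_zero, e3, e4, dist_comm]
      calc ∫⁻ rest : Fin k → E3, ∫⁻ x : E3,
              ∏ j : Fin (k+1), ENNReal.ofReal (‖V ((Fin.cons x rest : Fin (k+1) → E3) j)‖ /
                dist (chain x0 xk1 (Fin.cons x rest) ((Fin.succAbove 0 j).castSucc))
                     (chain x0 xk1 (Fin.cons x rest) ((Fin.succAbove 0 j).succ)))
          = ∫⁻ rest : Fin k → E3,
              (∏ i : Fin k, ENNReal.ofReal (‖V (rest i)‖ /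
                dist (chain x0 xk1 rest ((Fin.succAbove 0 i).castSucc))
                     (chain x0 xk1 rest ((Fin.succAbove 0 i).succ))))
              * ∫⁻ x : E3, ENNReal.ofReal (‖V x‖ /
                  dist (chain x0 xk1 rest ((0 : Fin (k+1)).succ)) x) := by
            refine lintegral_congr fun rest => ?_
            rw [← lintegral_const_mul _
              (show Measurable fun y : E3 => ENNReal.ofReal (‖V y‖ /
                  dist (chain x0 xk1 rest ((0 : Fin (k+1)).succ)) y) from
                ((hV.norm).div ((measurable_chain x0 xk1 _).comp
                  measurable_const |>.dist measurable_id)).ennreal_ofReal)]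
            exact lintegral_congr fun x => hrw rest x
        _ ≤ ∫⁻ rest : Fin k → E3,
              (∏ i : Fin k, ENNReal.ofReal (‖V (rest i)‖ /
                dist (chain x0 xk1 rest ((Fin.succAbove 0 i).castSucc))
                     (chain x0 xk1 rest ((Fin.succAbove 0 i).succ))))
              * ENNReal.ofReal M := by
            exact lintegral_mono fun rest => mul_le_mul_right
              (hM (chain x0 xk1 rest ((0 : Fin (k+1)).succ))) _
        _ = (∫⁻ rest : Fin k → E3,
              ∏ i : Fin k, ENNReal.ofReal (‖V (rest i)‖ /
                dist (chain x0 xk1 rest ((Fin.succAbove 0 i).castSucc))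
                     (chain x0 xk1 rest ((Fin.succAbove 0 i).succ))))
              * ENNReal.ofReal M := by
            exact lintegral_mul_const _ (measurable_prodInt V hV x0 xk1 _ _)
        _ ≤ (ENNReal.ofReal M) ^ k * ENNReal.ofReal M :=
            mul_le_mul_left (ih x0 xk1 0) _
        _ = (ENNReal.ofReal M) ^ (k+1) := (pow_succ _ _).symm
    | succ m =>
      have hFmeas := measurable_prodInt V hV x0 xk1
        (fun j : Fin (k+1) => (Fin.succAbove m.succ j).castSucc)
        (fun j : Fin (k+1) => (Fin.succAbove m.succ j).succ)
      rw [lintegral_pi_cons _ hFmeas]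
      have hrw : ∀ (x : E3) (rest : Fin k → E3),
          (∏ j : Fin (k+1), ENNReal.ofReal (‖V ((Fin.cons x rest : Fin (k+1) → E3) j)‖ /
            dist (chain x0 xk1 (Fin.cons x rest) ((Fin.succAbove m.succ j).castSucc))
                 (chain x0 xk1 (Fin.cons x rest) ((Fin.succAbove m.succ j).succ))))
          = ENNReal.ofReal (‖V x‖ / dist x0 x)
            * ∏ i : Fin k, ENNReal.ofReal (‖V (rest i)‖ /
                dist (chain x xk1 rest ((Fin.succAbove m i).castSucc))
                     (chain x xk1 rest ((Fin.succAbove m i).succ))) := by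
        intro x rest
        rw [Fin.prod_univ_succ]
        refine congrArg₂ (· * ·) ?_ ?_
        · -- factor 0
          have h0 : (Fin.succAbove m.succ (0 : Fin (k+1))) = (0 : Fin (k+2)) := by
            rw [Fin.succAbove_of_castSucc_lt _ _ (by simp [Fin.succ_pos]), Fin.castSucc_zero]
          have e3 : chain x0 xk1 (Fin.cons x rest)
              ((Fin.succAbove m.succ (0 : Fin (k+1))).castSucc) = x0 := by
            rw [h0, Fin.castSucc_zero, chain_zero]
          have e4 : chain x0 xk1 (Fin.cons x rest)
              ((Fin.succAbove m.succ (0 : Fin (k+1))).succ) = x := by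
            rw [h0, chain_cons, chain_zero]
          rw [Fin.cons_zero, e3, e4]
        · apply Finset.prod_congr rfl
          intro i _
          have h1 : Fin.succAbove m.succ i.succ = (Fin.succAbove m i).succ :=
            Fin.succ_succAbove_succ m i
          have e1 : chain x0 xk1 (Fin.cons x rest) ((Fin.succAbove m.succ i.succ).castSucc)
              = chain x xk1 rest ((Fin.succAbove m i).castSucc) := by
            rw [h1, ← Fin.succ_castSucc, chain_cons]
          have e2 : chain x0 xk1 (Fin.cons x rest) ((Fin.succAbove m.succ i.succ).succ)
              = chain x xk1 rest ((Fin.succAbove m i).succ) := by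
            rw [h1, chain_cons]
          rw [Fin.cons_succ, e1, e2]
      calc ∫⁻ x : E3, ∫⁻ rest : Fin k → E3,
              ∏ j : Fin (k+1), ENNReal.ofReal (‖V ((Fin.cons x rest : Fin (k+1) → E3) j)‖ /
                dist (chain x0 xk1 (Fin.cons x rest) ((Fin.succAbove m.succ j).castSucc))
                     (chain x0 xk1 (Fin.cons x rest) ((Fin.succAbove m.succ j).succ)))
          = ∫⁻ x : E3, ENNReal.ofReal (‖V x‖ / dist x0 x)
              * ∫⁻ rest : Fin k → E3,
                  ∏ i : Fin k, ENNReal.ofReal (‖V (rest i)‖ /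
                    dist (chain x xk1 rest ((Fin.succAbove m i).castSucc))
                         (chain x xk1 rest ((Fin.succAbove m i).succ))) := by
            refine lintegral_congr fun x => ?_
            rw [← lintegral_const_mul _ (measurable_prodInt V hV x xk1 _ _)]
            exact lintegral_congr fun rest => hrw x rest
        _ ≤ ∫⁻ x : E3, ENNReal.ofReal (‖V x‖ / dist x0 x) * (ENNReal.ofReal M) ^ k :=
            lintegral_mono fun x => mul_le_mul_right (ih x xk1 m) _
        _ = (∫⁻ x : E3, ENNReal.ofReal (‖V x‖ / dist x0 x)) * (ENNReal.ofReal M) ^ k :=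
            lintegral_mul_const _ (((hV.norm).div
              (measurable_const.dist measurable_id)).ennreal_ofReal)
        _ ≤ ENNReal.ofReal M * (ENNReal.ofReal M) ^ k := mul_le_mul_left (hM x0) _
        _ = (ENNReal.ofReal M) ^ (k+1) := (pow_succ' _ _).symm

theorem stmt_6 (k : ℕ) (hk : 1 ≤ k) (V : E3 → ℂ) (hV : Measurable V) (M : ℝ)
    (hM : ∀ x : E3,
      (∫⁻ y : E3, ENNReal.ofReal (‖V y‖ / dist x y)) ≤ ENNReal.ofReal M) :
    ∀ x0 xk1 : E3,
      (∫⁻ xs : Fin k → E3,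
        ENNReal.ofReal
          ((∏ j : Fin k, ‖V (xs j)‖) /
              (∏ j : Fin (k + 1),
                dist (chain x0 xk1 xs j.castSucc) (chain x0 xk1 xs j.succ)) *
            ∑ j : Fin (k + 1),
              dist (chain x0 xk1 xs j.castSucc) (chain x0 xk1 xs j.succ)))
        ≤ ENNReal.ofReal ((k + 1) * M ^ k) := by
  intro x0 xk1
  have hpt : ∀ xs : Fin k → E3,
      ENNReal.ofReal
          ((∏ j : Fin k, ‖V (xs j)‖) /
              (∏ j : Fin (k + 1),
                dist (chain x0 xk1 xs j.castSucc) (chain x0 xk1 xs j.succ)) *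
            ∑ j : Fin (k + 1),
              dist (chain x0 xk1 xs j.castSucc) (chain x0 xk1 xs j.succ))
        ≤ ∑ ℓ : Fin (k+1), ∏ j : Fin k,
            ENNReal.ofReal (‖V (xs j)‖ /
              dist (chain x0 xk1 xs ((ℓ.succAbove j).castSucc))
                   (chain x0 xk1 xs ((ℓ.succAbove j).succ))) := by
    intro xs
    set dd : Fin (k+1) → ℝ :=
      fun i => dist (chain x0 xk1 xs i.castSucc) (chain x0 xk1 xs i.succ) with hdd
    set P : ℝ := ∏ j : Fin k, ‖V (xs j)‖ with hP
    have hPnn : 0 ≤ P := Finset.prod_nonneg fun j _ => norm_nonneg _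
    have hddnn : ∀ i, 0 ≤ dd i := fun i => dist_nonneg
    have hterm : ∀ ℓ : Fin (k+1),
        P / (∏ i : Fin (k+1), dd i) * dd ℓ
          ≤ ∏ j : Fin k, ‖V (xs j)‖ / dd (ℓ.succAbove j) := by
      intro ℓ
      by_cases hz : ∃ i : Fin (k+1), dd i = 0
      · obtain ⟨i, hi⟩ := hz
        have hQ : (∏ i : Fin (k+1), dd i) = 0 :=
          Finset.prod_eq_zero (Finset.mem_univ i) hi
        rw [hQ, div_zero, zero_mul]
        exact Finset.prod_nonneg fun j _ =>
          div_nonneg (norm_nonneg _) (hddnn _)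
      · push_neg at hz
        have hB : (∏ j : Fin k, dd (ℓ.succAbove j)) ≠ 0 :=
          Finset.prod_ne_zero_iff.mpr fun j _ => hz _
        rw [Finset.prod_div_distrib, Fin.prod_univ_succAbove (fun i => dd i) ℓ]
        rw [← hP]
        apply le_of_eq
        field_simp
        rw [mul_div_assoc,
          div_self (hz ℓ), mul_one]
    calc ENNReal.ofReal (P / (∏ i : Fin (k+1), dd i) * ∑ i : Fin (k+1), dd i)
        = ENNReal.ofReal (∑ ℓ : Fin (k+1), P / (∏ i : Fin (k+1), dd i) * dd ℓ) := by
          rw [Finset.mul_sum]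
      _ = ∑ ℓ : Fin (k+1), ENNReal.ofReal (P / (∏ i : Fin (k+1), dd i) * dd ℓ) :=
          ENNReal.ofReal_sum_of_nonneg fun ℓ _ =>
            mul_nonneg (div_nonneg hPnn (Finset.prod_nonneg fun i _ => hddnn i)) (hddnn ℓ)
      _ ≤ ∑ ℓ : Fin (k+1), ENNReal.ofReal (∏ j : Fin k, ‖V (xs j)‖ / dd (ℓ.succAbove j)) :=
          Finset.sum_le_sum fun ℓ _ => ENNReal.ofReal_le_ofReal (hterm ℓ)
      _ = ∑ ℓ : Fin (k+1), ∏ j : Fin k,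
            ENNReal.ofReal (‖V (xs j)‖ / dd (ℓ.succAbove j)) :=
          Finset.sum_congr rfl fun ℓ _ =>
            ENNReal.ofReal_prod_of_nonneg fun j _ =>
              div_nonneg (norm_nonneg _) (hddnn _)
  calc (∫⁻ xs : Fin k → E3,
        ENNReal.ofReal
          ((∏ j : Fin k, ‖V (xs j)‖) /
              (∏ j : Fin (k + 1),
                dist (chain x0 xk1 xs j.castSucc) (chain x0 xk1 xs j.succ)) *
            ∑ j : Fin (k + 1),
              dist (chain x0 xk1 xs j.castSucc) (chain x0 xk1 xs j.succ)))
      ≤ ∫⁻ xs : Fin k → E3, ∑ ℓ : Fin (k+1), ∏ j : Fin k,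
          ENNReal.ofReal (‖V (xs j)‖ /
            dist (chain x0 xk1 xs ((ℓ.succAbove j).castSucc))
                 (chain x0 xk1 xs ((ℓ.succAbove j).succ))) := lintegral_mono hpt
    _ = ∑ ℓ : Fin (k+1), ∫⁻ xs : Fin k → E3, ∏ j : Fin k,
          ENNReal.ofReal (‖V (xs j)‖ /
            dist (chain x0 xk1 xs ((ℓ.succAbove j).castSucc))
                 (chain x0 xk1 xs ((ℓ.succAbove j).succ))) :=
        lintegral_finset_sum _ fun ℓ _ => measurable_prodInt V hV x0 xk1 _ _
    _ ≤ ∑ _ℓ : Fin (k+1), (ENNReal.ofReal M) ^ k :=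
        Finset.sum_le_sum fun ℓ _ => main_bound V hV M hM k x0 xk1 ℓ
    _ = (k+1 : ℕ) * (ENNReal.ofReal M) ^ k := by
        rw [Finset.sum_const, Finset.card_univ, Fintype.card_fin, nsmul_eq_mul]
    _ ≤ ENNReal.ofReal ((k + 1) * M ^ k) := by
        rcases le_or_gt 0 M with hM0 | hM0
        · rw [ENNReal.ofReal_mul (by positivity), ENNReal.ofReal_pow hM0]
          apply le_of_eq
          congr 1
          rw [show ((k : ℝ) + 1) = ((k+1 : ℕ) : ℝ) by push_cast; ring,
            ENNReal.ofReal_natCast]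
        · have : ENNReal.ofReal M = 0 := by
            simp [ENNReal.ofReal_eq_zero.mpr (le_of_lt hM0)]
          rw [this, zero_pow (by omega : k ≠ 0), mul_zero]
          exact zero_le
end
end

section
/- Let σ > 1/2, α > 1/2 and σ + α > 2. Then ∫_{ℝ³} ∫_{ℝ³} ⟨x⟩^{-2σ} |x − y|^{-2} ⟨y⟩^{-2α} dx dy < ∞. -/
open MeasureTheory

noncomputable section

/-- The Japanese bracket `⟨x⟩ = (1 + |x|²)^{1/2}`. -/
def jap (x : E3) : ℝ := Real.sqrt (1 + ‖x‖ ^ 2)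

lemma jap_nonneg (x : E3) : 0 ≤ jap x := Real.sqrt_nonneg _
lemma one_le_jap (x : E3) : 1 ≤ jap x := by
  have h : Real.sqrt 1 ≤ Real.sqrt (1 + ‖x‖ ^ 2) :=
    Real.sqrt_le_sqrt (by nlinarith [sq_nonneg ‖x‖])
  rw [jap]
  calc (1:ℝ) = Real.sqrt 1 := Real.sqrt_one.symm
    _ ≤ _ := h
lemma jap_pos (x : E3) : 0 < jap x := lt_of_lt_of_le one_pos (one_le_jap x)
lemma sq_jap (x : E3) : jap x ^ 2 = 1 + ‖x‖ ^ 2 := Real.sq_sqrt (by positivity)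

lemma jap_le_mul {x y : E3} {c : ℝ} (hc : 0 ≤ c)
    (h : 1 + ‖x‖ ^ 2 ≤ c ^ 2 * (1 + ‖y‖ ^ 2)) : jap x ≤ c * jap y := by
  rw [jap, jap]
  calc Real.sqrt (1 + ‖x‖ ^ 2) ≤ Real.sqrt (c ^ 2 * (1 + ‖y‖ ^ 2)) := Real.sqrt_le_sqrt h
    _ = c * Real.sqrt (1 + ‖y‖ ^ 2) := by
        rw [Real.sqrt_mul (sq_nonneg c), Real.sqrt_sq hc]

lemma rpow_anti {u v : ℝ} (hu : 0 < u) (huv : u ≤ v) {t : ℝ} (ht : 0 ≤ t) :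
    v ^ (-t) ≤ u ^ (-t) := by
  rw [Real.rpow_neg (hu.trans_le huv).le, Real.rpow_neg hu.le]
  exact inv_anti₀ (Real.rpow_pos_of_pos hu t) (Real.rpow_le_rpow hu.le huv ht)

lemma half_rpow {u w t : ℝ} (hu : 0 < u) (hw : 0 < w) (h : u ≤ 2 * w) (ht : 0 ≤ t) :
    w ^ (-t) ≤ 2 ^ t * u ^ (-t) := by
  have h1 : u / 2 ≤ w := by linarith
  have h2 : w ^ (-t) ≤ (u / 2) ^ (-t) := rpow_anti (by positivity) h1 ht
  refine h2.trans_eq ?_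
  rw [div_eq_mul_inv, Real.mul_rpow hu.le (by norm_num), Real.inv_rpow (by norm_num),
    Real.rpow_neg (by norm_num : (0:ℝ) ≤ 2), inv_inv, mul_comm]

lemma inv_sq_le {n u K : ℝ} (hn : 0 < n) (hu : 0 < u) (hK : 0 < K)
    (h : u ^ 2 ≤ K * n ^ 2) : n ^ (-(2:ℝ)) ≤ K * u ^ (-(2:ℝ)) := by
  have e : ∀ v : ℝ, 0 < v → v ^ (-(2:ℝ)) = (v ^ 2)⁻¹ := by
    intro v hv
    rw [Real.rpow_neg hv.le, show ((2:ℝ)) = ((2:ℕ):ℝ) by norm_num, Real.rpow_natCast]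
  rw [e n hn, e u hu]
  have h3 : (0:ℝ) < u ^ 2 := by positivity
  rw [inv_le_iff_one_le_mul₀ (by positivity)]
  calc (1:ℝ) = u ^ 2 * (u ^ 2)⁻¹ := (mul_inv_cancel₀ h3.ne').symm
    _ ≤ (K * n ^ 2) * (u ^ 2)⁻¹ :=
        mul_le_mul_of_nonneg_right h (inv_nonneg.2 h3.le)
    _ = K * (u ^ 2)⁻¹ * n ^ 2 := by ring

def gg (z : E3) : ℝ := if ‖z‖ ≤ 1 then ‖z‖ ^ (-(2:ℝ)) else 0

lemma gg_nonneg (z : E3) : 0 ≤ gg z := by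
  rw [gg]; split
  · exact Real.rpow_nonneg (norm_nonneg _) _
  · exact le_refl 0

lemma nn (r : ℝ) (x : E3) : 0 ≤ jap x ^ r := Real.rpow_nonneg (jap_nonneg x) r

set_option maxHeartbeats 2000000 in
lemma master (σ α t s : ℝ) (hα : 0 < α) (ht0 : 0 ≤ t) (htq : t ≤ 2*α) (hs0 : 0 ≤ s)
    (x y : E3) :
    jap x ^ (-(2:ℝ) * σ) * ‖x - y‖ ^ (-(2:ℝ)) * jap y ^ (-(2:ℝ) * α) ≤
      (4:ℝ) ^ α * (jap x ^ (-(2*σ + 2*α)) * gg (x - y))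
      + 2 ^ (1+t) * (jap x ^ (-(2*σ + t)) * jap (x - y) ^ (-(2 + 2*α - t)))
      + 2 ^ (1+t) * (jap x ^ (-(2*σ + t)) * jap y ^ (-(2*α + 2 - t)))
      + 8 * (jap x ^ (-(2*σ + 2 - s)) * jap y ^ (-(2*α + s))) := by
  have hX := jap_pos x
  have hY := jap_pos y
  have hZ := jap_pos (x - y)
  have rpadd : ∀ (z : E3) (a b : ℝ), jap z ^ (a + b) = jap z ^ a * jap z ^ b :=
    fun z a b => Real.rpow_add (jap_pos z) a b
  have h2t : (2:ℝ) ^ (1+t) = 2 * 2 ^ t := by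
    rw [Real.rpow_add (by norm_num), Real.rpow_one]
  have hxyn : ‖x‖ ≤ ‖y‖ + ‖x - y‖ := by
    calc ‖x‖ = ‖y + (x - y)‖ := by rw [add_sub_cancel]
      _ ≤ ‖y‖ + ‖x - y‖ := norm_add_le _ _
  -- nonnegativity of the four summands
  have nn1 : (0:ℝ) ≤ (4:ℝ) ^ α * (jap x ^ (-(2*σ + 2*α)) * gg (x - y)) :=
    mul_nonneg (Real.rpow_nonneg (by norm_num) _) (mul_nonneg (nn _ _) (gg_nonneg _))
  have nn2 : (0:ℝ) ≤ 2 ^ (1+t) * (jap x ^ (-(2*σ + t)) * jap (x - y) ^ (-(2 + 2*α - t))) :=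
    mul_nonneg (Real.rpow_nonneg (by norm_num) _) (mul_nonneg (nn _ _) (nn _ _))
  have nn3 : (0:ℝ) ≤ 2 ^ (1+t) * (jap x ^ (-(2*σ + t)) * jap y ^ (-(2*α + 2 - t))) :=
    mul_nonneg (Real.rpow_nonneg (by norm_num) _) (mul_nonneg (nn _ _) (nn _ _))
  have nn4 : (0:ℝ) ≤ 8 * (jap x ^ (-(2*σ + 2 - s)) * jap y ^ (-(2*α + s))) :=
    mul_nonneg (by norm_num) (mul_nonneg (nn _ _) (nn _ _))
  rw [show -(2:ℝ) * σ = -(2*σ) by ring, show -(2:ℝ) * α = -(2*α) by ring]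
  rcases le_or_gt ‖x - y‖ 1 with hn | hn
  · -- region A
    have hx1 : ‖x‖ ≤ ‖y‖ + 1 := by linarith
    have hx2 : ‖x‖ ^ 2 ≤ (‖y‖ + 1) ^ 2 := by
      nlinarith [norm_nonneg x, norm_nonneg y]
    have hXY : jap x ≤ 2 * jap y := jap_le_mul (by norm_num)
      (by nlinarith [sq_nonneg (‖y‖ - 1)])
    have keyA : jap y ^ (-(2*α)) ≤ (4:ℝ) ^ α * jap x ^ (-(2*α)) := by
      have h := half_rpow hX hY hXY (by linarith : (0:ℝ) ≤ 2*α)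
      have e4 : (2:ℝ) ^ (2*α) = 4 ^ α := by
        rw [show (2:ℝ)*α = (2:ℝ)*α from rfl, Real.rpow_mul (by norm_num : (0:ℝ) ≤ 2)]
        norm_num
      rw [e4] at h; exact h
    have : jap x ^ (-(2*σ)) * ‖x - y‖ ^ (-(2:ℝ)) * jap y ^ (-(2*α)) ≤
        (4:ℝ) ^ α * (jap x ^ (-(2*σ + 2*α)) * gg (x - y)) := by
      rw [gg, if_pos hn, show -(2*σ + 2*α) = -(2*σ) + -(2*α) by ring, rpadd]
      calc jap x ^ (-(2*σ)) * ‖x - y‖ ^ (-(2:ℝ)) * jap y ^ (-(2*α))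
          = jap x ^ (-(2*σ)) * ‖x - y‖ ^ (-(2:ℝ)) * jap y ^ (-(2*α)) := rfl
        _ ≤ jap x ^ (-(2*σ)) * ‖x - y‖ ^ (-(2:ℝ)) * ((4:ℝ) ^ α * jap x ^ (-(2*α))) :=
            mul_le_mul_of_nonneg_left keyA
              (mul_nonneg (nn _ _) (Real.rpow_nonneg (norm_nonneg _) _))
        _ = (4:ℝ) ^ α * (jap x ^ (-(2*σ)) * jap x ^ (-(2*α)) * ‖x - y‖ ^ (-(2:ℝ))) := by ring
    linarith
  · have hnpos : (0:ℝ) < ‖x - y‖ := lt_trans one_pos hn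
    rcases le_or_gt ‖x‖ (2 * ‖y‖) with hxy | hxy
    · have hXY : jap x ≤ 2 * jap y := jap_le_mul (by norm_num)
        (by nlinarith [norm_nonneg y, norm_nonneg x])
      have e2 : jap y ^ (-t) ≤ 2 ^ t * jap x ^ (-t) := half_rpow hX hY hXY ht0
      have splitY : jap y ^ (-(2*α)) = jap y ^ (-t) * jap y ^ (-(2*α - t)) := by
        rw [← rpadd]; congr 1; ring
      rcases le_or_gt ‖x - y‖ ‖y‖ with h1 | h1
      · -- region B1
        have e1 : ‖x - y‖ ^ (-(2:ℝ)) ≤ 2 * jap (x - y) ^ (-(2:ℝ)) := by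
          refine inv_sq_le hnpos hZ (by norm_num) ?_
          have := sq_jap (x - y); nlinarith
        have e3 : jap y ^ (-(2*α - t)) ≤ jap (x - y) ^ (-(2*α - t)) := by
          refine rpow_anti hZ ?_ (by linarith)
          have hsq : ‖x - y‖ ^ 2 ≤ ‖y‖ ^ 2 := by
            nlinarith [norm_nonneg (x - y), norm_nonneg y]
          have h := jap_le_mul (by norm_num : (0:ℝ) ≤ 1)
            (by nlinarith : 1 + ‖x - y‖ ^ 2 ≤ 1 ^ 2 * (1 + ‖y‖ ^ 2))
          rw [one_mul] at h; exact h
        have : jap x ^ (-(2*σ)) * ‖x - y‖ ^ (-(2:ℝ)) * jap y ^ (-(2*α)) ≤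
            2 ^ (1+t) * (jap x ^ (-(2*σ + t)) * jap (x - y) ^ (-(2 + 2*α - t))) := by
          rw [splitY, show -(2*σ + t) = -(2*σ) + -t by ring, rpadd,
            show -(2 + 2*α - t) = -(2:ℝ) + -(2*α - t) by ring, rpadd, h2t]
          calc jap x ^ (-(2*σ)) * ‖x - y‖ ^ (-(2:ℝ)) * (jap y ^ (-t) * jap y ^ (-(2*α - t)))
              ≤ jap x ^ (-(2*σ)) * (2 * jap (x - y) ^ (-(2:ℝ))) *
                ((2 ^ t * jap x ^ (-t)) * jap (x - y) ^ (-(2*α - t))) := by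
                refine mul_le_mul (mul_le_mul_of_nonneg_left e1 (nn _ _))
                  (mul_le_mul e2 e3 (nn _ _)
                    (mul_nonneg (Real.rpow_nonneg (by norm_num) _) (nn _ _)))
                  (mul_nonneg (nn _ _) (nn _ _))
                  (mul_nonneg (nn _ _) (mul_nonneg (by norm_num) (nn _ _)))
            _ = 2 * 2 ^ t * (jap x ^ (-(2*σ)) * jap x ^ (-t) *
                (jap (x - y) ^ (-(2:ℝ)) * jap (x - y) ^ (-(2*α - t)))) := by ring
        linarith
      · -- region B2
        have e1 : ‖x - y‖ ^ (-(2:ℝ)) ≤ 2 * jap y ^ (-(2:ℝ)) := by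
          refine inv_sq_le hnpos hY (by norm_num) ?_
          have hsq : ‖y‖ ^ 2 ≤ ‖x - y‖ ^ 2 := by
            nlinarith [norm_nonneg (x - y), norm_nonneg y]
          have := sq_jap y; nlinarith
        have : jap x ^ (-(2*σ)) * ‖x - y‖ ^ (-(2:ℝ)) * jap y ^ (-(2*α)) ≤
            2 ^ (1+t) * (jap x ^ (-(2*σ + t)) * jap y ^ (-(2*α + 2 - t))) := by
          rw [splitY, show -(2*σ + t) = -(2*σ) + -t by ring, rpadd,
            show -(2*α + 2 - t) = -(2:ℝ) + -(2*α - t) by ring, rpadd, h2t]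
          calc jap x ^ (-(2*σ)) * ‖x - y‖ ^ (-(2:ℝ)) * (jap y ^ (-t) * jap y ^ (-(2*α - t)))
              ≤ jap x ^ (-(2*σ)) * (2 * jap y ^ (-(2:ℝ))) *
                ((2 ^ t * jap x ^ (-t)) * jap y ^ (-(2*α - t))) := by
                refine mul_le_mul (mul_le_mul_of_nonneg_left e1 (nn _ _))
                  (mul_le_mul_of_nonneg_right e2 (nn _ _))
                  (mul_nonneg (nn _ _) (nn _ _))
                  (mul_nonneg (nn _ _) (mul_nonneg (by norm_num) (nn _ _)))
            _ = 2 * 2 ^ t * (jap x ^ (-(2*σ)) * jap x ^ (-t) *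
                (jap y ^ (-(2:ℝ)) * jap y ^ (-(2*α - t)))) := by ring
        linarith
    · -- region C
      have hyx : ‖y‖ ≤ ‖x‖ := le_trans (by nlinarith [norm_nonneg y]) hxy.le
      have hn2 : ‖x‖ ≤ 2 * ‖x - y‖ := by linarith
      have hx2 : ‖x‖ ^ 2 ≤ 4 * ‖x - y‖ ^ 2 := by
        nlinarith [norm_nonneg x, norm_nonneg (x - y)]
      have e1 : ‖x - y‖ ^ (-(2:ℝ)) ≤ 8 * jap x ^ (-(2:ℝ)) := by
        refine inv_sq_le hnpos hX (by norm_num) ?_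
        have := sq_jap x; nlinarith
      have e2 : jap x ^ (-s) ≤ jap y ^ (-s) := by
        refine rpow_anti hY ?_ hs0
        have hy2 : ‖y‖ ^ 2 ≤ ‖x‖ ^ 2 := by nlinarith [norm_nonneg y, norm_nonneg x]
        have h := jap_le_mul (by norm_num : (0:ℝ) ≤ 1)
          (by nlinarith : 1 + ‖y‖ ^ 2 ≤ 1 ^ 2 * (1 + ‖x‖ ^ 2))
        rw [one_mul] at h; exact h
      have : jap x ^ (-(2*σ)) * ‖x - y‖ ^ (-(2:ℝ)) * jap y ^ (-(2*α)) ≤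
          8 * (jap x ^ (-(2*σ + 2 - s)) * jap y ^ (-(2*α + s))) := by
        rw [show -(2*α + s) = -(2*α) + -s by ring, rpadd]
        have split : jap x ^ (-(2*σ)) * jap x ^ (-(2:ℝ)) =
            jap x ^ (-(2*σ + 2 - s)) * jap x ^ (-s) := by
          rw [← rpadd, ← rpadd]; congr 1; ring
        calc jap x ^ (-(2*σ)) * ‖x - y‖ ^ (-(2:ℝ)) * jap y ^ (-(2*α))
            ≤ jap x ^ (-(2*σ)) * (8 * jap x ^ (-(2:ℝ))) * jap y ^ (-(2*α)) :=
              mul_le_mul_of_nonneg_right (mul_le_mul_of_nonneg_left e1 (nn _ _)) (nn _ _)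
          _ = 8 * ((jap x ^ (-(2*σ)) * jap x ^ (-(2:ℝ))) * jap y ^ (-(2*α))) := by ring
          _ = 8 * (jap x ^ (-(2*σ + 2 - s)) * (jap x ^ (-s) * jap y ^ (-(2*α)))) := by
              rw [split]; ring
          _ ≤ 8 * (jap x ^ (-(2*σ + 2 - s)) * (jap y ^ (-s) * jap y ^ (-(2*α)))) := by
              refine mul_le_mul_of_nonneg_left (mul_le_mul_of_nonneg_left
                (mul_le_mul_of_nonneg_right e2 (nn _ _)) (nn _ _)) (by norm_num)
          _ = 8 * (jap x ^ (-(2*σ + 2 - s)) * (jap y ^ (-(2*α)) * jap y ^ (-s))) := by ring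
      linarith

open scoped ENNReal

lemma cont_jap : Continuous jap := by
  apply Real.continuous_sqrt.comp; continuity

lemma cJ (r : ℝ) : Continuous fun x : E3 => jap x ^ (-r) := by
  rw [continuous_iff_continuousAt]
  intro x
  exact (Real.continuousAt_rpow_const (jap x) (-r) (Or.inl (jap_pos x).ne')).comp
    cont_jap.continuousAt

lemma rpow_neg_two_eq {v : ℝ} (hv : 0 ≤ v) : v ^ (-(2:ℝ)) = (v ^ 2)⁻¹ := by
  rcases eq_or_lt_of_le hv with h | h
  · rw [← h]; rw [Real.zero_rpow (by norm_num)]; norm_num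
  · rw [Real.rpow_neg h.le, show ((2:ℝ)) = ((2:ℕ):ℝ) by norm_num, Real.rpow_natCast]

def J (r : ℝ) (x : E3) : ℝ≥0∞ := ENNReal.ofReal (jap x ^ (-r))
def G (z : E3) : ℝ≥0∞ := ENNReal.ofReal (gg z)

lemma mJ (r : ℝ) : Measurable (J r) :=
  ENNReal.measurable_ofReal.comp (cJ r).measurable

lemma gg_eq (z : E3) : gg z = if ‖z‖ ≤ 1 then (‖z‖ ^ 2)⁻¹ else 0 := by
  rw [gg, rpow_neg_two_eq (norm_nonneg z)]

lemma mG : Measurable G := by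
  apply ENNReal.measurable_ofReal.comp
  have : (gg : E3 → ℝ) = fun z => if ‖z‖ ≤ 1 then (‖z‖ ^ 2)⁻¹ else 0 :=
    funext gg_eq
  rw [this]
  exact Measurable.ite (measurableSet_le measurable_norm measurable_const)
    ((measurable_norm.pow_const 2).inv) measurable_const

lemma fin_J {r : ℝ} (hr : 3 < r) : (∫⁻ x : E3, J r x) < ⊤ := by
  have hnr : (Module.finrank ℝ E3 : ℝ) < r := by
    simp only [finrank_euclideanSpace_fin]; norm_num; linarith
  have hi := integrable_rpow_neg_one_add_norm_sq (E := E3) (μ := volume) hnr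
  have heq : ∀ x : E3, jap x ^ (-r) = ((1:ℝ) + ‖x‖ ^ 2) ^ (-r / 2) := by
    intro x
    rw [jap, Real.sqrt_eq_rpow, ← Real.rpow_mul (by positivity)]
    congr 1; ring
  have hb : (∫⁻ x : E3, J r x) ≤ ∫⁻ x : E3, ‖((1:ℝ) + ‖x‖ ^ 2) ^ (-r / 2)‖₊ := by
    apply lintegral_mono
    intro x
    rw [J, heq x]
    exact Real.ofReal_le_enorm _
  exact lt_of_le_of_lt hb hi.2

lemma shell_exists {r : ℝ} (h0 : 0 < r) (h1 : r ≤ 1) :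
    ∃ n : ℕ, (1/2:ℝ) ^ (n+1) < r ∧ r ≤ (1/2) ^ n := by
  have hex : ∃ n : ℕ, (1/2:ℝ) ^ n < r := exists_pow_lt_of_lt_one h0 (by norm_num)
  classical
  have hk := Nat.find_spec hex
  have hk0 : Nat.find hex ≠ 0 := by
    intro h
    rw [h] at hk
    simp at hk
    linarith
  obtain ⟨m, hm⟩ := Nat.exists_eq_succ_of_ne_zero hk0
  refine ⟨m, ?_, ?_⟩
  · rw [← Nat.succ_eq_add_one, ← hm]; exact hk
  · have := Nat.find_min hex (by omega : m < Nat.find hex)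
    linarith [not_lt.mp this]

lemma fin_G : (∫⁻ z : E3, G z) < ⊤ := by
  classical
  set S : ℕ → Set E3 := fun n => {z : E3 | (1/2:ℝ) ^ (n+1) < ‖z‖ ∧ ‖z‖ ≤ (1/2) ^ n} with hS
  have hSm : ∀ n, MeasurableSet (S n) := by
    intro n
    exact (measurableSet_lt measurable_const measurable_norm).inter
      (measurableSet_le measurable_norm measurable_const)
  have key : ∀ z : E3, G z ≤ ∑' n : ℕ, Set.indicator (S n) (fun _ => (4:ℝ≥0∞) ^ (n+1)) z := by
    intro z
    rcases le_or_gt ‖z‖ 1 with h1 | h1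
    · rcases eq_or_lt_of_le (norm_nonneg z) with h0 | h0
      · have : G z = 0 := by
          rw [G, gg_eq, if_pos h1, ← h0]
          norm_num
        rw [this]; exact zero_le
      · obtain ⟨n, hn1, hn2⟩ := shell_exists h0 h1
        have hGz : G z ≤ (4:ℝ≥0∞) ^ (n+1) := by
          rw [G, gg_eq, if_pos h1]
          have hb : ((1/2:ℝ) ^ (n+1)) ^ 2 ≤ ‖z‖ ^ 2 := by
            nlinarith [pow_pos (by norm_num : (0:ℝ) < 1/2) (n+1)]
          have : (‖z‖ ^ 2)⁻¹ ≤ (((1/2:ℝ) ^ (n+1)) ^ 2)⁻¹ := by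
            apply inv_anti₀ (by positivity) hb
          refine le_trans (ENNReal.ofReal_le_ofReal this) ?_
          have he : (((1/2:ℝ) ^ (n+1)) ^ 2)⁻¹ = (4:ℝ) ^ (n+1) := by
            rw [← pow_mul, one_div, inv_pow, inv_inv,
              show (n+1)*2 = 2*(n+1) by ring, pow_mul]
            norm_num
          rw [he, ENNReal.ofReal_pow (by norm_num)]
          norm_num
        refine le_trans hGz ?_
        have hz : z ∈ S n := ⟨hn1, hn2⟩
        have : Set.indicator (S n) (fun _ => (4:ℝ≥0∞) ^ (n+1)) z = (4:ℝ≥0∞) ^ (n+1) :=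
          Set.indicator_of_mem hz _
        rw [← this]
        exact ENNReal.le_tsum n
    · have : G z = 0 := by rw [G, gg_eq, if_neg (not_le.mpr h1)]; simp
      rw [this]; exact zero_le
  calc (∫⁻ z : E3, G z) ≤ ∫⁻ z : E3, ∑' n : ℕ, Set.indicator (S n) (fun _ => (4:ℝ≥0∞) ^ (n+1)) z :=
        lintegral_mono key
    _ = ∑' n : ℕ, ∫⁻ z : E3, Set.indicator (S n) (fun _ => (4:ℝ≥0∞) ^ (n+1)) z :=
        lintegral_tsum (fun n => ((measurable_const).indicator (hSm n)).aemeasurable)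
    _ = ∑' n : ℕ, (4:ℝ≥0∞) ^ (n+1) * volume (S n) := by
        congr 1; funext n
        rw [lintegral_indicator (hSm n), setLIntegral_const]
    _ ≤ ∑' n : ℕ, (4:ℝ≥0∞) ^ (n+1) * (ENNReal.ofReal ((((1/2:ℝ)) ^ n) ^ 3) * volume (Metric.ball (0:E3) 1)) := by
        apply ENNReal.tsum_le_tsum
        intro n
        apply mul_le_mul_right
        have hsub : S n ⊆ Metric.closedBall (0:E3) ((1/2:ℝ) ^ n) := by
          intro z hz
          rw [Metric.mem_closedBall, dist_zero_right]
          exact hz.2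
        refine le_trans (measure_mono hsub) ?_
        rw [Measure.addHaar_closedBall volume (0:E3) (by positivity : (0:ℝ) ≤ (1/2) ^ n)]
        rw [finrank_euclideanSpace_fin]
    _ < ⊤ := by
        have hterm : ∀ n : ℕ, (4:ℝ≥0∞) ^ (n+1) * (ENNReal.ofReal ((((1/2:ℝ)) ^ n) ^ 3) * volume (Metric.ball (0:E3) 1)) =
            4 * (1/2:ℝ≥0∞) ^ n * volume (Metric.ball (0:E3) 1) := by
          intro n
          have h1 : ENNReal.ofReal ((((1/2:ℝ)) ^ n) ^ 3) = ((1/8:ℝ≥0∞)) ^ n := by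
            rw [← pow_mul]
            rw [show (1/2:ℝ)^(n*3) = ((1/8:ℝ))^n by
              rw [show n*3 = 3*n by ring, pow_mul]; norm_num]
            rw [ENNReal.ofReal_pow (by norm_num)]
            congr 1
            rw [show (1/8:ℝ) = ((8:ℝ))⁻¹ by norm_num,
              ENNReal.ofReal_inv_of_pos (by norm_num)]
            norm_num [ENNReal.div_eq_inv_mul]
          rw [h1, pow_succ, mul_comm ((4:ℝ≥0∞) ^ n) 4, mul_assoc, ← mul_assoc ((4:ℝ≥0∞) ^ n), ← mul_pow]
          have : (4:ℝ≥0∞) * (1/8) = 1/2 := by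
            rw [ENNReal.div_eq_inv_mul, ENNReal.div_eq_inv_mul, mul_one, mul_one]
            rw [show (8:ℝ≥0∞) = 4 * 2 by norm_num, ENNReal.mul_inv (by norm_num) (by norm_num)]
            rw [← mul_assoc, ENNReal.mul_inv_cancel (by norm_num) (by norm_num), one_mul]
          rw [this, ← mul_assoc]
        rw [tsum_congr hterm]
        rw [ENNReal.tsum_mul_right, ENNReal.tsum_mul_left, ENNReal.tsum_geometric]
        refine ENNReal.mul_lt_top (ENNReal.mul_lt_top (by norm_num) ?_) measure_ball_lt_top
        rw [show (1:ℝ≥0∞) - 1/2 = 2⁻¹ by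
          rw [one_div]; exact ENNReal.one_sub_inv_two]
        rw [inv_inv]
        exact ENNReal.ofNat_lt_top

lemma translate_lint (h : E3 → ℝ≥0∞) (hm : Measurable h) (x : E3) :
    (∫⁻ y : E3, h (x - y)) = ∫⁻ y : E3, h y :=
  (Measure.measurePreserving_sub_left (volume : Measure E3) x).lintegral_comp hm

set_option maxHeartbeats 1000000 in
theorem stmt_9 (σ α : ℝ) (hσ : 1 / 2 < σ) (hα : 1 / 2 < α) (hσα : 2 < σ + α) :
    (∫⁻ x : E3, ∫⁻ y : E3,
      ENNReal.ofReal (jap x ^ (-(2 : ℝ) * σ) * ‖x - y‖ ^ (-(2 : ℝ)) *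
        jap y ^ (-(2 : ℝ) * α))) < ⊤ := by
  set t := max 0 (1 + α - σ) with htdef
  set s := max 0 (1 + σ - α) with hsdef
  have ht0 : 0 ≤ t := le_max_left _ _
  have hs0 : 0 ≤ s := le_max_left _ _
  have htq : t ≤ 2 * α := max_le (by linarith) (by linarith)
  have ha : 3 < 2 * σ + t := by
    rcases le_or_gt (1 + α - σ) 0 with h | h
    · rw [htdef, max_eq_left h]; linarith
    · rw [htdef, max_eq_right h.le]; linarith
  have hb : 3 < 2 + 2 * α - t := by
    rcases le_or_gt (1 + α - σ) 0 with h | h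
    · rw [htdef, max_eq_left h]; linarith
    · rw [htdef, max_eq_right h.le]; linarith
  have hb2 : 3 < 2 * α + 2 - t := by linarith
  have ha' : 3 < 2 * σ + 2 - s := by
    rcases le_or_gt (1 + σ - α) 0 with h | h
    · rw [hsdef, max_eq_left h]; linarith
    · rw [hsdef, max_eq_right h.le]; linarith
  have hb' : 3 < 2 * α + s := by
    rcases le_or_gt (1 + σ - α) 0 with h | h
    · rw [hsdef, max_eq_left h]; linarith
    · rw [hsdef, max_eq_right h.le]; linarith
  have hr1 : 3 < 2 * σ + 2 * α := by linarith
  set c1 : ℝ≥0∞ := ENNReal.ofReal ((4:ℝ) ^ α) with hc1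
  set c2 : ℝ≥0∞ := ENNReal.ofReal ((2:ℝ) ^ (1 + t)) with hc2
  set c4 : ℝ≥0∞ := ENNReal.ofReal (8:ℝ) with hc4
  have hsub : ∀ x : E3, Measurable fun y : E3 => x - y :=
    fun x => measurable_const.sub measurable_id
  have key : ∀ x y : E3,
      ENNReal.ofReal (jap x ^ (-(2 : ℝ) * σ) * ‖x - y‖ ^ (-(2 : ℝ)) *
        jap y ^ (-(2 : ℝ) * α)) ≤
      (c1 * J (2*σ + 2*α) x) * G (x - y)
      + ((c2 * J (2*σ + t) x) * J (2 + 2*α - t) (x - y)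
      + ((c2 * J (2*σ + t) x) * J (2*α + 2 - t) y
      + (c4 * J (2*σ + 2 - s) x) * J (2*α + s) y)) := by
    intro x y
    refine le_trans (ENNReal.ofReal_le_ofReal
      (master σ α t s (by linarith) ht0 htq hs0 x y)) ?_
    have e1 : ENNReal.ofReal ((4:ℝ) ^ α * (jap x ^ (-(2*σ + 2*α)) * gg (x - y))) =
        (c1 * J (2*σ + 2*α) x) * G (x - y) := by
      rw [ENNReal.ofReal_mul (Real.rpow_nonneg (by norm_num) _),
        ENNReal.ofReal_mul (nn _ _), ← mul_assoc]
      rfl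
    have e2 : ENNReal.ofReal ((2:ℝ) ^ (1+t) * (jap x ^ (-(2*σ + t)) * jap (x - y) ^ (-(2 + 2*α - t)))) =
        (c2 * J (2*σ + t) x) * J (2 + 2*α - t) (x - y) := by
      rw [ENNReal.ofReal_mul (Real.rpow_nonneg (by norm_num) _),
        ENNReal.ofReal_mul (nn _ _), ← mul_assoc]
      rfl
    have e3 : ENNReal.ofReal ((2:ℝ) ^ (1+t) * (jap x ^ (-(2*σ + t)) * jap y ^ (-(2*α + 2 - t)))) =
        (c2 * J (2*σ + t) x) * J (2*α + 2 - t) y := by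
      rw [ENNReal.ofReal_mul (Real.rpow_nonneg (by norm_num) _),
        ENNReal.ofReal_mul (nn _ _), ← mul_assoc]
      rfl
    have e4 : ENNReal.ofReal ((8:ℝ) * (jap x ^ (-(2*σ + 2 - s)) * jap y ^ (-(2*α + s)))) =
        (c4 * J (2*σ + 2 - s) x) * J (2*α + s) y := by
      rw [ENNReal.ofReal_mul (by norm_num : (0:ℝ) ≤ 8),
        ENNReal.ofReal_mul (nn _ _), ← mul_assoc]
      rfl
    calc ENNReal.ofReal ((4:ℝ) ^ α * (jap x ^ (-(2*σ + 2*α)) * gg (x - y))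
          + 2 ^ (1+t) * (jap x ^ (-(2*σ + t)) * jap (x - y) ^ (-(2 + 2*α - t)))
          + 2 ^ (1+t) * (jap x ^ (-(2*σ + t)) * jap y ^ (-(2*α + 2 - t)))
          + 8 * (jap x ^ (-(2*σ + 2 - s)) * jap y ^ (-(2*α + s))))
        ≤ ENNReal.ofReal ((4:ℝ) ^ α * (jap x ^ (-(2*σ + 2*α)) * gg (x - y))
          + 2 ^ (1+t) * (jap x ^ (-(2*σ + t)) * jap (x - y) ^ (-(2 + 2*α - t)))
          + 2 ^ (1+t) * (jap x ^ (-(2*σ + t)) * jap y ^ (-(2*α + 2 - t))))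
          + ENNReal.ofReal (8 * (jap x ^ (-(2*σ + 2 - s)) * jap y ^ (-(2*α + s)))) :=
          ENNReal.ofReal_add_le
      _ ≤ (ENNReal.ofReal ((4:ℝ) ^ α * (jap x ^ (-(2*σ + 2*α)) * gg (x - y))
          + 2 ^ (1+t) * (jap x ^ (-(2*σ + t)) * jap (x - y) ^ (-(2 + 2*α - t))))
          + ENNReal.ofReal (2 ^ (1+t) * (jap x ^ (-(2*σ + t)) * jap y ^ (-(2*α + 2 - t)))))
          + ENNReal.ofReal (8 * (jap x ^ (-(2*σ + 2 - s)) * jap y ^ (-(2*α + s)))) :=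
          add_le_add_left ENNReal.ofReal_add_le _
      _ ≤ ((ENNReal.ofReal ((4:ℝ) ^ α * (jap x ^ (-(2*σ + 2*α)) * gg (x - y)))
          + ENNReal.ofReal (2 ^ (1+t) * (jap x ^ (-(2*σ + t)) * jap (x - y) ^ (-(2 + 2*α - t)))))
          + ENNReal.ofReal (2 ^ (1+t) * (jap x ^ (-(2*σ + t)) * jap y ^ (-(2*α + 2 - t)))))
          + ENNReal.ofReal (8 * (jap x ^ (-(2*σ + 2 - s)) * jap y ^ (-(2*α + s)))) :=
          add_le_add_left (add_le_add_left ENNReal.ofReal_add_le _) _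
      _ = _ := by rw [e1, e2, e3, e4]; ring
  set IG : ℝ≥0∞ := ∫⁻ z : E3, G z with hIG
  set IJb : ℝ≥0∞ := ∫⁻ z : E3, J (2 + 2*α - t) z with hIJb
  set IJb2 : ℝ≥0∞ := ∫⁻ z : E3, J (2*α + 2 - t) z with hIJb2
  set IJb' : ℝ≥0∞ := ∫⁻ z : E3, J (2*α + s) z with hIJb'
  have inner : ∀ x : E3, (∫⁻ y : E3,
      ENNReal.ofReal (jap x ^ (-(2 : ℝ) * σ) * ‖x - y‖ ^ (-(2 : ℝ)) *
        jap y ^ (-(2 : ℝ) * α))) ≤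
      (c1 * J (2*σ + 2*α) x) * IG
      + ((c2 * J (2*σ + t) x) * IJb
      + ((c2 * J (2*σ + t) x) * IJb2
      + (c4 * J (2*σ + 2 - s) x) * IJb')) := by
    intro x
    have mGx : Measurable fun y : E3 => G (x - y) := mG.comp (hsub x)
    have mJbx : Measurable fun y : E3 => J (2 + 2*α - t) (x - y) := (mJ _).comp (hsub x)
    calc (∫⁻ y : E3, ENNReal.ofReal (jap x ^ (-(2 : ℝ) * σ) * ‖x - y‖ ^ (-(2 : ℝ)) *
            jap y ^ (-(2 : ℝ) * α)))
        ≤ ∫⁻ y : E3, ((c1 * J (2*σ + 2*α) x) * G (x - y)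
          + ((c2 * J (2*σ + t) x) * J (2 + 2*α - t) (x - y)
          + ((c2 * J (2*σ + t) x) * J (2*α + 2 - t) y
          + (c4 * J (2*σ + 2 - s) x) * J (2*α + s) y))) := lintegral_mono (key x)
      _ = (∫⁻ y : E3, (c1 * J (2*σ + 2*α) x) * G (x - y))
          + ((∫⁻ y : E3, (c2 * J (2*σ + t) x) * J (2 + 2*α - t) (x - y))
          + ((∫⁻ y : E3, (c2 * J (2*σ + t) x) * J (2*α + 2 - t) y)
          + (∫⁻ y : E3, (c4 * J (2*σ + 2 - s) x) * J (2*α + s) y))) := by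
          rw [lintegral_add_left (mGx.const_mul _),
            lintegral_add_left (mJbx.const_mul _),
            lintegral_add_left ((mJ _).const_mul _)]
      _ = (c1 * J (2*σ + 2*α) x) * IG
          + ((c2 * J (2*σ + t) x) * IJb
          + ((c2 * J (2*σ + t) x) * IJb2
          + (c4 * J (2*σ + 2 - s) x) * IJb')) := by
          rw [lintegral_const_mul _ mGx,
            lintegral_const_mul _ mJbx,
            lintegral_const_mul _ (mJ _),
            lintegral_const_mul _ (mJ _),
            translate_lint G mG x, translate_lint (J (2 + 2*α - t)) (mJ _) x]
  have fIG : IG < ⊤ := fin_G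
  have fIJb : IJb < ⊤ := fin_J hb
  have fIJb2 : IJb2 < ⊤ := fin_J hb2
  have fIJb' : IJb' < ⊤ := fin_J hb'
  calc (∫⁻ x : E3, ∫⁻ y : E3,
        ENNReal.ofReal (jap x ^ (-(2 : ℝ) * σ) * ‖x - y‖ ^ (-(2 : ℝ)) *
          jap y ^ (-(2 : ℝ) * α)))
      ≤ ∫⁻ x : E3, ((c1 * IG) * J (2*σ + 2*α) x
        + ((c2 * IJb) * J (2*σ + t) x
        + ((c2 * IJb2) * J (2*σ + t) x
        + (c4 * IJb') * J (2*σ + 2 - s) x))) := by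
        refine lintegral_mono fun x => le_trans (inner x) (le_of_eq ?_)
        ring
    _ = (c1 * IG) * (∫⁻ x : E3, J (2*σ + 2*α) x)
        + ((c2 * IJb) * (∫⁻ x : E3, J (2*σ + t) x)
        + ((c2 * IJb2) * (∫⁻ x : E3, J (2*σ + t) x)
        + (c4 * IJb') * (∫⁻ x : E3, J (2*σ + 2 - s) x))) := by
        rw [lintegral_add_left ((mJ _).const_mul _),
          lintegral_add_left ((mJ _).const_mul _),
          lintegral_add_left ((mJ _).const_mul _),
          lintegral_const_mul _ (mJ _), lintegral_const_mul _ (mJ _),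
          lintegral_const_mul _ (mJ _), lintegral_const_mul _ (mJ _)]
    _ < ⊤ := by
        have f1 := fin_J ha
        have f2 := fin_J ha'
        have f3 := fin_J hr1
        refine ENNReal.add_lt_top.2 ⟨?_, ENNReal.add_lt_top.2 ⟨?_, ENNReal.add_lt_top.2 ⟨?_, ?_⟩⟩⟩
        · exact ENNReal.mul_lt_top (ENNReal.mul_lt_top ENNReal.ofReal_lt_top fIG) f3
        · exact ENNReal.mul_lt_top (ENNReal.mul_lt_top ENNReal.ofReal_lt_top fIJb) f1
        · exact ENNReal.mul_lt_top (ENNReal.mul_lt_top ENNReal.ofReal_lt_top fIJb2) f1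
        · exact ENNReal.mul_lt_top (ENNReal.mul_lt_top ENNReal.ofReal_lt_top fIJb') f2
end
end

section
/- Let j ≥ 0 be an integer. (a) If σ > 1/2 + j, then sup_{x∈ℝ³} ∫_{ℝ³} ( |u − x| − |x| )^{2j} |x − u|^{-2} ⟨u⟩^{-2σ} du < ∞. (b) If σ > 3/2 + j, then there is a constant C with ∫_{ℝ³} ( |u − x| − |x| )^{2j} |x − u|^{-2} ⟨u⟩^{-2σ} du ≤ C ⟨x⟩^{-2} for all x ∈ ℝ³. -/
open MeasureTheory

noncomputable section

open Metric Set
open scoped ENNReal NNReal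

lemma ball_int : ∫⁻ v in Metric.ball (0:E3) 1, ENNReal.ofReal (‖v‖ ^ (-(2:ℝ))) < ⊤ := by
  have hm : Measurable fun v : E3 => ‖v‖ ^ (-(2:ℝ)) := by fun_prop
  have hnn : (0:E3 → ℝ) ≤ᵐ[volume.restrict (ball (0:E3) 1)] fun v => ‖v‖ ^ (-(2:ℝ)) :=
    Filter.Eventually.of_forall fun v => Real.rpow_nonneg (norm_nonneg v) _
  rw [lintegral_eq_lintegral_meas_le _ hnn hm.aemeasurable]
  set B := volume (Metric.ball (0:E3) 1) with hB
  have hBlt : B < ⊤ := measure_ball_lt_top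
  set F := fun t : ℝ => (volume.restrict (ball (0:E3) 1)) {a : E3 | t ≤ ‖a‖ ^ (-(2:ℝ))} with hF
  calc ∫⁻ t in Ioi (0:ℝ), F t
      ≤ ∫⁻ t in Ioc (0:ℝ) 1 ∪ Ioi 1, F t := lintegral_mono_set Ioi_subset_Ioc_union_Ioi
    _ ≤ (∫⁻ t in Ioc (0:ℝ) 1, F t) + ∫⁻ t in Ioi (1:ℝ), F t := lintegral_union_le _ _ _
    _ < ⊤ := by
        refine ENNReal.add_lt_top.2 ⟨?_, ?_⟩
        · calc (∫⁻ t in Ioc (0:ℝ) 1, F t) ≤ ∫⁻ _ in Ioc (0:ℝ) 1, B := by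
                refine setLIntegral_mono' measurableSet_Ioc fun t _ => ?_
                calc F t ≤ (volume.restrict (ball (0:E3) 1)) univ := measure_mono (subset_univ _)
                  _ = B := by rw [Measure.restrict_apply_univ]
            _ = B * volume (Ioc (0:ℝ) 1) := setLIntegral_const _ _
            _ < ⊤ := ENNReal.mul_lt_top hBlt (by simp)
        · have key : ∀ t ∈ Ioi (1:ℝ), F t ≤ ENNReal.ofReal (t ^ (-(3:ℝ)/2)) * B := by
            intro t ht
            have ht0 : (0:ℝ) < t := lt_trans zero_lt_one ht
            have hsub : {a : E3 | t ≤ ‖a‖ ^ (-(2:ℝ))} ∩ ball (0:E3) 1 ⊆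
                closedBall (0:E3) (t ^ (-(1:ℝ)/2)) := by
              rintro a ⟨ha, -⟩
              simp only [mem_setOf_eq] at ha
              have ha0 : a ≠ 0 := by
                rintro rfl
                rw [norm_zero, Real.zero_rpow (by norm_num)] at ha
                linarith
              have hna : (0:ℝ) < ‖a‖ := norm_pos_iff.2 ha0
              have h1 : (‖a‖ ^ (-(2:ℝ))) ^ (-(1:ℝ)/2) ≤ t ^ (-(1:ℝ)/2) :=
                Real.rpow_le_rpow_of_nonpos ht0 ha (by norm_num)
              have h2 : (‖a‖ ^ (-(2:ℝ))) ^ (-(1:ℝ)/2) = ‖a‖ := by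
                rw [← Real.rpow_mul hna.le]; norm_num
              rw [mem_closedBall_zero_iff]
              rw [h2] at h1; exact h1
            have hr : (0:ℝ) ≤ t ^ (-(1:ℝ)/2) := Real.rpow_nonneg ht0.le _
            calc F t = volume ({a : E3 | t ≤ ‖a‖ ^ (-(2:ℝ))} ∩ ball (0:E3) 1) :=
                  Measure.restrict_apply' measurableSet_ball
              _ ≤ volume (closedBall (0:E3) (t ^ (-(1:ℝ)/2))) := measure_mono hsub
              _ = ENNReal.ofReal ((t ^ (-(1:ℝ)/2)) ^ Module.finrank ℝ E3) * B := by
                  rw [Measure.addHaar_closedBall _ _ hr]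
              _ = ENNReal.ofReal (t ^ (-(3:ℝ)/2)) * B := by
                  congr 1
                  rw [show Module.finrank ℝ E3 = 3 from finrank_euclideanSpace_fin, ← Real.rpow_natCast (t ^ (-(1:ℝ)/2)) 3,
                    ← Real.rpow_mul ht0.le]
                  norm_num
          calc (∫⁻ t in Ioi (1:ℝ), F t)
              ≤ ∫⁻ t in Ioi (1:ℝ), ENNReal.ofReal (t ^ (-(3:ℝ)/2)) * B :=
                setLIntegral_mono' measurableSet_Ioi key
            _ = (∫⁻ t in Ioi (1:ℝ), ENNReal.ofReal (t ^ (-(3:ℝ)/2))) * B :=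
                lintegral_mul_const' _ _ hBlt.ne
            _ < ⊤ := by
                refine ENNReal.mul_lt_top ?_ hBlt
                have hint : IntegrableOn (fun t : ℝ => t ^ (-(3:ℝ)/2)) (Ioi 1) :=
                  integrableOn_Ioi_rpow_of_lt (by norm_num) zero_lt_one
                have hnn2 : (0:ℝ → ℝ) ≤ᵐ[volume.restrict (Ioi (1:ℝ))] fun t => t ^ (-(3:ℝ)/2) := by
                  refine (ae_restrict_iff' measurableSet_Ioi).2 (Filter.Eventually.of_forall ?_)
                  intro t ht
                  exact Real.rpow_nonneg (le_of_lt (lt_trans zero_lt_one ht)) _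
                rw [← ofReal_integral_eq_lintegral_ofReal hint hnn2]
                exact ENNReal.ofReal_lt_top

lemma key_K {s : ℝ} (hs : 3 < 2*s) : ∫⁻ u : E3, ENNReal.ofReal ((1+‖u‖^2) ^ (-s)) < ⊤ := by
  have hs0 : (0:ℝ) < 2*s := by linarith
  have hpt : ∀ u : E3, (1+‖u‖^2 : ℝ) ^ (-s) ≤ (2:ℝ) ^ s * (1 + ‖u‖) ^ (-(2*s)) := by
    intro u
    have := rpow_neg_one_add_norm_sq_le (r := 2*s) u hs0
    have h1 : -(2*s)/2 = -s := by ring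
    have h2 : (2*s)/2 = s := by ring
    rw [h1, h2] at this
    exact this
  calc ∫⁻ u : E3, ENNReal.ofReal ((1+‖u‖^2) ^ (-s))
      ≤ ∫⁻ u : E3, ENNReal.ofReal ((2:ℝ) ^ s * (1 + ‖u‖) ^ (-(2*s))) :=
        lintegral_mono fun u => ENNReal.ofReal_le_ofReal (hpt u)
    _ = ∫⁻ u : E3, ENNReal.ofReal ((2:ℝ) ^ s) * ENNReal.ofReal ((1 + ‖u‖) ^ (-(2*s))) := by
        simp_rw [ENNReal.ofReal_mul (Real.rpow_nonneg (by norm_num : (0:ℝ) ≤ 2) s)]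
    _ = ENNReal.ofReal ((2:ℝ) ^ s) * ∫⁻ u : E3, ENNReal.ofReal ((1 + ‖u‖) ^ (-(2*s))) :=
        lintegral_const_mul' _ _ ENNReal.ofReal_ne_top
    _ < ⊤ := ENNReal.mul_lt_top ENNReal.ofReal_lt_top
        (finite_integral_one_add_norm (by rw [show Module.finrank ℝ E3 = 3 from finrank_euclideanSpace_fin]; exact_mod_cast hs))

lemma key_phi {p : ℝ} (hp : 1 < p) :
    ∫⁻ v : E3, ENNReal.ofReal (‖v‖ ^ (-(2:ℝ)) * min 1 (‖v‖ ^ (-p))) < ⊤ := by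
  rw [← lintegral_add_compl (fun v : E3 => ENNReal.ofReal (‖v‖ ^ (-(2:ℝ)) * min 1 (‖v‖ ^ (-p))))
    (measurableSet_ball (x := (0:E3)) (ε := 1))]
  refine ENNReal.add_lt_top.2 ⟨?_, ?_⟩
  · calc ∫⁻ v in ball (0:E3) 1, ENNReal.ofReal (‖v‖ ^ (-(2:ℝ)) * min 1 (‖v‖ ^ (-p)))
        ≤ ∫⁻ v in ball (0:E3) 1, ENNReal.ofReal (‖v‖ ^ (-(2:ℝ))) := by
          refine lintegral_mono fun v => ENNReal.ofReal_le_ofReal ?_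
          exact mul_le_of_le_one_right (Real.rpow_nonneg (norm_nonneg v) _) (min_le_left _ _)
      _ < ⊤ := ball_int
  · have key : ∀ v : E3, v ∈ (ball (0:E3) 1)ᶜ →
        ‖v‖ ^ (-(2:ℝ)) * min 1 (‖v‖ ^ (-p)) ≤ (2:ℝ) ^ (2+p) * (1 + ‖v‖) ^ (-(2+p)) := by
      intro v hv
      rw [mem_compl_iff, mem_ball_zero_iff, not_lt] at hv
      have hv0 : (0:ℝ) < ‖v‖ := lt_of_lt_of_le zero_lt_one hv
      have h1 : ‖v‖ ^ (-(2:ℝ)) * min 1 (‖v‖ ^ (-p)) ≤ ‖v‖ ^ (-(2+p)) := by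
        calc ‖v‖ ^ (-(2:ℝ)) * min 1 (‖v‖ ^ (-p)) ≤ ‖v‖ ^ (-(2:ℝ)) * ‖v‖ ^ (-p) :=
              mul_le_mul_of_nonneg_left (min_le_right _ _) (Real.rpow_nonneg (norm_nonneg v) _)
          _ = ‖v‖ ^ (-(2+p)) := by rw [← Real.rpow_add hv0]; ring_nf
      have h2 : ‖v‖ ^ (-(2+p)) ≤ (2:ℝ) ^ (2+p) * (1 + ‖v‖) ^ (-(2+p)) := by
        have hb : (1 + ‖v‖)/2 ≤ ‖v‖ := by linarith
        have hineq : ‖v‖ ^ (-(2+p)) ≤ ((1 + ‖v‖)/2) ^ (-(2+p)) :=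
          Real.rpow_le_rpow_of_nonpos (by positivity) hb (by linarith)
        calc ‖v‖ ^ (-(2+p)) ≤ ((1 + ‖v‖)/2) ^ (-(2+p)) := hineq
          _ = (1 + ‖v‖) ^ (-(2+p)) / (2:ℝ) ^ (-(2+p)) :=
              Real.div_rpow (by positivity) (by norm_num) _
          _ = (2:ℝ) ^ (2+p) * (1 + ‖v‖) ^ (-(2+p)) := by
              rw [Real.rpow_neg (by norm_num : (0:ℝ) ≤ 2), div_eq_mul_inv, inv_inv]
              ring
      exact h1.trans h2
    calc ∫⁻ v in (ball (0:E3) 1)ᶜ, ENNReal.ofReal (‖v‖ ^ (-(2:ℝ)) * min 1 (‖v‖ ^ (-p)))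
        ≤ ∫⁻ v in (ball (0:E3) 1)ᶜ, ENNReal.ofReal ((2:ℝ) ^ (2+p) * (1 + ‖v‖) ^ (-(2+p))) :=
          setLIntegral_mono' measurableSet_ball.compl fun v hv =>
            ENNReal.ofReal_le_ofReal (key v hv)
      _ ≤ ∫⁻ v : E3, ENNReal.ofReal ((2:ℝ) ^ (2+p) * (1 + ‖v‖) ^ (-(2+p))) :=
          setLIntegral_le_lintegral _ _
      _ = ENNReal.ofReal ((2:ℝ) ^ (2+p)) * ∫⁻ v : E3, ENNReal.ofReal ((1 + ‖v‖) ^ (-(2+p))) := by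
          simp_rw [ENNReal.ofReal_mul (Real.rpow_nonneg (by norm_num : (0:ℝ) ≤ 2) (2+p))]
          exact lintegral_const_mul' _ _ ENNReal.ofReal_ne_top
      _ < ⊤ := ENNReal.mul_lt_top ENNReal.ofReal_lt_top
          (finite_integral_one_add_norm (by rw [show Module.finrank ℝ E3 = 3 from finrank_euclideanSpace_fin]; norm_num; linarith))

lemma key_P2 {τ : ℝ} (hτ : 1/2 < τ) :
    ∫⁻ u : E3, ENNReal.ofReal (‖u‖ ^ (-(2:ℝ)) * (1+‖u‖^2) ^ (-τ)) < ⊤ := by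
  rw [← lintegral_add_compl (fun u : E3 => ENNReal.ofReal (‖u‖ ^ (-(2:ℝ)) * (1+‖u‖^2) ^ (-τ)))
    (measurableSet_ball (x := (0:E3)) (ε := 1))]
  refine ENNReal.add_lt_top.2 ⟨?_, ?_⟩
  · calc ∫⁻ u in ball (0:E3) 1, ENNReal.ofReal (‖u‖ ^ (-(2:ℝ)) * (1+‖u‖^2) ^ (-τ))
        ≤ ∫⁻ u in ball (0:E3) 1, ENNReal.ofReal (‖u‖ ^ (-(2:ℝ))) := by
          refine lintegral_mono fun u => ENNReal.ofReal_le_ofReal ?_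
          refine mul_le_of_le_one_right (Real.rpow_nonneg (norm_nonneg u) _) ?_
          exact Real.rpow_le_one_of_one_le_of_nonpos (by nlinarith [sq_nonneg ‖u‖]) (by linarith)
      _ < ⊤ := ball_int
  · have key : ∀ u : E3, u ∈ (ball (0:E3) 1)ᶜ →
        ‖u‖ ^ (-(2:ℝ)) * (1+‖u‖^2) ^ (-τ) ≤ 2 * (1+‖u‖^2) ^ (-(1+τ)) := by
      intro u hu
      rw [mem_compl_iff, mem_ball_zero_iff, not_lt] at hu
      have hu0 : (0:ℝ) < ‖u‖ := lt_of_lt_of_le zero_lt_one hu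
      have ha : (0:ℝ) < 1 + ‖u‖^2 := by positivity
      have h1 : ‖u‖ ^ (-(2:ℝ)) ≤ 2 * (1+‖u‖^2) ^ (-(1:ℝ)) := by
        have e1 : ‖u‖ ^ (-(2:ℝ)) = (‖u‖^2)⁻¹ := by
          rw [← Real.rpow_natCast ‖u‖ 2, ← Real.rpow_neg hu0.le]; norm_num
        have e2 : (1+‖u‖^2 : ℝ) ^ (-(1:ℝ)) = (1+‖u‖^2)⁻¹ := Real.rpow_neg_one _
        have h12 : (1+‖u‖^2:ℝ) ≤ 2*‖u‖^2 := by nlinarith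
        have h3 : ((2*‖u‖^2:ℝ))⁻¹ ≤ (1+‖u‖^2)⁻¹ :=
          inv_anti₀ (by positivity) h12
        have h4 : (‖u‖^2:ℝ)⁻¹ = 2 * (2*‖u‖^2)⁻¹ := by
          field_simp
        rw [e1, e2, h4]
        linarith
      calc ‖u‖ ^ (-(2:ℝ)) * (1+‖u‖^2) ^ (-τ) ≤ 2 * (1+‖u‖^2) ^ (-(1:ℝ)) * (1+‖u‖^2) ^ (-τ) :=
            mul_le_mul_of_nonneg_right h1 (Real.rpow_nonneg ha.le _)
        _ = 2 * (1+‖u‖^2) ^ (-(1+τ)) := by rw [mul_assoc, ← Real.rpow_add ha]; ring_nf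
    calc ∫⁻ u in (ball (0:E3) 1)ᶜ, ENNReal.ofReal (‖u‖ ^ (-(2:ℝ)) * (1+‖u‖^2) ^ (-τ))
        ≤ ∫⁻ u in (ball (0:E3) 1)ᶜ, ENNReal.ofReal (2 * (1+‖u‖^2) ^ (-(1+τ))) :=
          setLIntegral_mono' measurableSet_ball.compl fun u hu =>
            ENNReal.ofReal_le_ofReal (key u hu)
      _ ≤ ∫⁻ u : E3, ENNReal.ofReal (2 * (1+‖u‖^2) ^ (-(1+τ))) := setLIntegral_le_lintegral _ _
      _ = ENNReal.ofReal 2 * ∫⁻ u : E3, ENNReal.ofReal ((1+‖u‖^2) ^ (-(1+τ))) := by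
          simp_rw [ENNReal.ofReal_mul (by norm_num : (0:ℝ) ≤ 2)]
          exact lintegral_const_mul' _ _ ENNReal.ofReal_ne_top
      _ < ⊤ := ENNReal.mul_lt_top ENNReal.ofReal_lt_top (key_K (by linarith))

lemma phi_meas (p : ℝ) : Measurable fun v : E3 => ENNReal.ofReal (‖v‖ ^ (-(2:ℝ)) * min 1 (‖v‖ ^ (-p))) := by
  fun_prop

lemma key_A {τ : ℝ} (hτ : 1/2 < τ) : ∃ S : ℝ≥0∞, S ≠ ⊤ ∧ ∀ x : E3,
    ∫⁻ u : E3, ENNReal.ofReal (‖x - u‖ ^ (-(2:ℝ)) * (1+‖u‖^2) ^ (-τ)) ≤ S := by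
  have hτ0 : (0:ℝ) < τ := by linarith
  set Iφ := ∫⁻ v : E3, ENNReal.ofReal (‖v‖ ^ (-(2:ℝ)) * min 1 (‖v‖ ^ (-(2*τ)))) with hIφ
  set IP := ∫⁻ u : E3, ENNReal.ofReal (‖u‖ ^ (-(2:ℝ)) * (1+‖u‖^2) ^ (-τ)) with hIP
  have hIφlt : Iφ < ⊤ := key_phi (by linarith)
  have hIPlt : IP < ⊤ := key_P2 hτ
  refine ⟨ENNReal.ofReal ((9/4:ℝ) ^ τ) * Iφ + 4 * IP, ?_, ?_⟩
  · exact (ENNReal.add_lt_top.2 ⟨ENNReal.mul_lt_top ENNReal.ofReal_lt_top hIφlt,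
      ENNReal.mul_lt_top (by norm_num) hIPlt⟩).ne
  intro x
  have hae : ∀ᵐ u : E3, ENNReal.ofReal (‖x - u‖ ^ (-(2:ℝ)) * (1+‖u‖^2) ^ (-τ)) ≤
      ENNReal.ofReal ((9/4:ℝ) ^ τ * (‖x - u‖ ^ (-(2:ℝ)) * min 1 (‖x - u‖ ^ (-(2*τ)))))
      + ENNReal.ofReal (4 * (‖u‖ ^ (-(2:ℝ)) * (1+‖u‖^2) ^ (-τ))) := by
    have h0 : ∀ᵐ u : E3, u ≠ 0 := by
      rw [ae_iff]
      simpa using measure_singleton (0:E3)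
    filter_upwards [h0] with u hu0
    set d := ‖x - u‖ with hd
    have ha : (0:ℝ) < 1 + ‖u‖^2 := by positivity
    by_cases hux : u = x
    · subst hux
      simp only [sub_self, norm_zero] at hd
      rw [hd, Real.zero_rpow (by norm_num : (-(2:ℝ)) ≠ 0), zero_mul, ENNReal.ofReal_zero]
      simp
    by_cases hcase : d ≤ ‖u‖/2
    · -- case 1
      have hdpos : (0:ℝ) < d := norm_pos_iff.2 (sub_ne_zero.2 (Ne.symm hux))
      have hxu : ‖x‖ ≤ ‖u‖ + d := by
        calc ‖x‖ = ‖u + (x - u)‖ := by rw [add_sub_cancel]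
          _ ≤ ‖u‖ + d := norm_add_le _ _
      have hux2 : ‖u‖/2 ≤ ‖x‖ := by
        have : ‖u‖ ≤ ‖x‖ + d := by
          calc ‖u‖ = ‖x - (x - u)‖ := by rw [sub_sub_cancel]
            _ ≤ ‖x‖ + d := norm_sub_le _ _
        linarith
      have hdx : d ≤ ‖x‖ := le_trans hcase hux2
      have h1 : (4/9:ℝ)*(1+‖x‖^2) ≤ 1+‖u‖^2 := by nlinarith [norm_nonneg u, norm_nonneg x]
      have h2 : (1+‖u‖^2:ℝ) ^ (-τ) ≤ ((4/9:ℝ)*(1+‖x‖^2)) ^ (-τ) :=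
        Real.rpow_le_rpow_of_nonpos (by positivity) h1 (by linarith)
      have h2' : ((4/9:ℝ)*(1+‖x‖^2)) ^ (-τ) = (9/4:ℝ) ^ τ * (1+‖x‖^2) ^ (-τ) := by
        rw [Real.mul_rpow (by norm_num) (by positivity)]
        congr 1
        rw [Real.rpow_neg (by norm_num), ← Real.inv_rpow (by norm_num)]
        norm_num
      have h3 : (1+‖x‖^2:ℝ) ^ (-τ) ≤ min 1 (d ^ (-(2*τ))) := by
        refine le_min ?_ ?_
        · exact Real.rpow_le_one_of_one_le_of_nonpos (by nlinarith [sq_nonneg ‖x‖]) (by linarith)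
        · have hda : d^2 ≤ 1+‖x‖^2 := by nlinarith
          calc (1+‖x‖^2:ℝ) ^ (-τ) ≤ (d^2 : ℝ) ^ (-τ) :=
                Real.rpow_le_rpow_of_nonpos (by positivity) hda (by linarith)
            _ = d ^ (-(2*τ)) := by
                rw [← Real.rpow_natCast d 2, ← Real.rpow_mul hdpos.le]
                norm_num
      have hfinal : d ^ (-(2:ℝ)) * (1+‖u‖^2) ^ (-τ) ≤
          (9/4:ℝ) ^ τ * (d ^ (-(2:ℝ)) * min 1 (d ^ (-(2*τ)))) := by
        have hB : (0:ℝ) ≤ d ^ (-(2:ℝ)) := Real.rpow_nonneg hdpos.le _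
        calc d ^ (-(2:ℝ)) * (1+‖u‖^2) ^ (-τ)
            ≤ d ^ (-(2:ℝ)) * ((9/4:ℝ) ^ τ * (1+‖x‖^2) ^ (-τ)) := by
              rw [← h2']; exact mul_le_mul_of_nonneg_left h2 hB
          _ ≤ d ^ (-(2:ℝ)) * ((9/4:ℝ) ^ τ * min 1 (d ^ (-(2*τ)))) := by
              refine mul_le_mul_of_nonneg_left ?_ hB
              exact mul_le_mul_of_nonneg_left h3 (Real.rpow_nonneg (by norm_num) _)
          _ = (9/4:ℝ) ^ τ * (d ^ (-(2:ℝ)) * min 1 (d ^ (-(2*τ)))) := by ring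
      exact le_trans (ENNReal.ofReal_le_ofReal hfinal) le_self_add
    · -- case 2
      push_neg at hcase
      have hu0' : (0:ℝ) < ‖u‖ := norm_pos_iff.2 hu0
      have h1 : d ^ (-(2:ℝ)) ≤ (‖u‖/2) ^ (-(2:ℝ)) :=
        Real.rpow_le_rpow_of_nonpos (by positivity) hcase.le (by norm_num)
      have h2 : ((‖u‖:ℝ)/2) ^ (-(2:ℝ)) = 4 * ‖u‖ ^ (-(2:ℝ)) := by
        rw [Real.div_rpow (norm_nonneg u) (by norm_num)]
        rw [show ((2:ℝ) ^ (-(2:ℝ))) = 1/4 by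
          rw [Real.rpow_neg (by norm_num), show ((2:ℝ) ^ (2:ℝ)) = 4 by
            rw [show ((2:ℝ):ℝ) = ((2:ℕ):ℝ) by norm_num, Real.rpow_natCast]; norm_num]
          norm_num]
        ring
      have hfinal : d ^ (-(2:ℝ)) * (1+‖u‖^2) ^ (-τ) ≤
          4 * (‖u‖ ^ (-(2:ℝ)) * (1+‖u‖^2) ^ (-τ)) := by
        calc d ^ (-(2:ℝ)) * (1+‖u‖^2) ^ (-τ) ≤ (4 * ‖u‖ ^ (-(2:ℝ))) * (1+‖u‖^2) ^ (-τ) := by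
              rw [← h2]; exact mul_le_mul_of_nonneg_right h1 (Real.rpow_nonneg ha.le _)
          _ = 4 * (‖u‖ ^ (-(2:ℝ)) * (1+‖u‖^2) ^ (-τ)) := by ring
      exact le_trans (ENNReal.ofReal_le_ofReal hfinal) le_add_self
  calc ∫⁻ u : E3, ENNReal.ofReal (‖x - u‖ ^ (-(2:ℝ)) * (1+‖u‖^2) ^ (-τ))
      ≤ ∫⁻ u : E3, (ENNReal.ofReal ((9/4:ℝ) ^ τ * (‖x - u‖ ^ (-(2:ℝ)) * min 1 (‖x - u‖ ^ (-(2*τ)))))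
        + ENNReal.ofReal (4 * (‖u‖ ^ (-(2:ℝ)) * (1+‖u‖^2) ^ (-τ)))) := lintegral_mono_ae hae
    _ = (∫⁻ u : E3, ENNReal.ofReal ((9/4:ℝ) ^ τ * (‖x - u‖ ^ (-(2:ℝ)) * min 1 (‖x - u‖ ^ (-(2*τ))))))
        + ∫⁻ u : E3, ENNReal.ofReal (4 * (‖u‖ ^ (-(2:ℝ)) * (1+‖u‖^2) ^ (-τ))) := by
        refine lintegral_add_left ?_ _
        fun_prop
    _ ≤ ENNReal.ofReal ((9/4:ℝ) ^ τ) * Iφ + 4 * IP := by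
        gcongr
        · simp_rw [ENNReal.ofReal_mul (Real.rpow_nonneg (by norm_num : (0:ℝ) ≤ 9/4) τ)]
          rw [lintegral_const_mul' _ _ ENNReal.ofReal_ne_top]
          gcongr
          have hmp := (Measure.measurePreserving_sub_left (volume : Measure E3) x).lintegral_comp
            (phi_meas (2*τ))
          rw [hIφ, ← hmp]
        · simp_rw [ENNReal.ofReal_mul (by norm_num : (0:ℝ) ≤ 4)]
          rw [lintegral_const_mul' _ _ ENNReal.ofReal_ne_top,
            show ENNReal.ofReal (4:ℝ) = 4 by norm_num]

lemma key_B {τ : ℝ} (hτ : 3/2 < τ) : ∃ C : ℝ, ∀ x : E3,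
    ∫⁻ u : E3, ENNReal.ofReal (‖x - u‖ ^ (-(2:ℝ)) * (1+‖u‖^2) ^ (-τ)) ≤
      ENNReal.ofReal (C * (1+‖x‖^2)⁻¹) := by
  obtain ⟨S, hS, hSx⟩ := key_A (by linarith : 1/2 < τ)
  set p := 2*τ - 2 with hp
  have hp1 : 1 < p := by rw [hp]; linarith
  set Iφ := ∫⁻ v : E3, ENNReal.ofReal (‖v‖ ^ (-(2:ℝ)) * min 1 (‖v‖ ^ (-p))) with hIφ
  set IK := ∫⁻ u : E3, ENNReal.ofReal ((1+‖u‖^2) ^ (-τ)) with hIK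
  have hIφlt : Iφ < ⊤ := key_phi hp1
  have hIKlt : IK < ⊤ := key_K (by linarith)
  set T : ℝ≥0∞ := ENNReal.ofReal ((4:ℝ) ^ τ) * Iφ + 8 * IK with hT
  have hTlt : T < ⊤ := ENNReal.add_lt_top.2 ⟨ENNReal.mul_lt_top ENNReal.ofReal_lt_top hIφlt,
    ENNReal.mul_lt_top (by norm_num) hIKlt⟩
  refine ⟨max (2 * S.toReal) T.toReal, fun x => ?_⟩
  have hx2 : (0:ℝ) < 1 + ‖x‖^2 := by positivity
  have hinv0 : (0:ℝ) ≤ (1+‖x‖^2)⁻¹ := by positivity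
  have hSnn : 0 ≤ S.toReal := ENNReal.toReal_nonneg
  have hTnn : 0 ≤ T.toReal := ENNReal.toReal_nonneg
  by_cases hx : ‖x‖ ≤ 1
  · have h2 : (1+‖x‖^2:ℝ) ≤ 2 := by nlinarith [norm_nonneg x]
    have hhalf : (1/2:ℝ) ≤ (1+‖x‖^2)⁻¹ := by
      rw [show (1/2:ℝ) = 2⁻¹ by norm_num]
      exact inv_anti₀ hx2 h2
    calc ∫⁻ u : E3, ENNReal.ofReal (‖x - u‖ ^ (-(2:ℝ)) * (1+‖u‖^2) ^ (-τ)) ≤ S := hSx x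
      _ = ENNReal.ofReal S.toReal := (ENNReal.ofReal_toReal hS).symm
      _ ≤ ENNReal.ofReal (max (2 * S.toReal) T.toReal * (1+‖x‖^2)⁻¹) := by
          refine ENNReal.ofReal_le_ofReal ?_
          calc S.toReal = 2 * S.toReal * (1/2) := by ring
            _ ≤ max (2 * S.toReal) T.toReal * (1+‖x‖^2)⁻¹ :=
              mul_le_mul (le_max_left _ _) hhalf (by norm_num) (by positivity)
  · push_neg at hx
    have hpt : ∀ u : E3, ENNReal.ofReal (‖x - u‖ ^ (-(2:ℝ)) * (1+‖u‖^2) ^ (-τ)) ≤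
        ENNReal.ofReal ((1+‖x‖^2)⁻¹ * ((4:ℝ) ^ τ * (‖x - u‖ ^ (-(2:ℝ)) * min 1 (‖x - u‖ ^ (-p)))))
        + ENNReal.ofReal ((1+‖x‖^2)⁻¹ * (8 * ((1+‖u‖^2) ^ (-τ)))) := by
      intro u
      set d := ‖x - u‖ with hd
      have ha : (0:ℝ) < 1 + ‖u‖^2 := by positivity
      by_cases hux : u = x
      · subst hux
        simp only [sub_self, norm_zero] at hd
        rw [hd, Real.zero_rpow (by norm_num : (-(2:ℝ)) ≠ 0), zero_mul, ENNReal.ofReal_zero]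
        simp
      by_cases hcase : d ≤ ‖x‖/2
      · have hdpos : (0:ℝ) < d := norm_pos_iff.2 (sub_ne_zero.2 (Ne.symm (Ne.symm (fun h => hux h.symm))))
        have hux2 : ‖x‖/2 ≤ ‖u‖ := by
          have : ‖x‖ ≤ ‖u‖ + d := by
            calc ‖x‖ = ‖u + (x - u)‖ := by rw [add_sub_cancel]
              _ ≤ ‖u‖ + d := norm_add_le _ _
          linarith
        have hdx : d ≤ ‖x‖ := by linarith [norm_nonneg x]
        have h1 : (1/4:ℝ)*(1+‖x‖^2) ≤ 1+‖u‖^2 := by nlinarith [norm_nonneg u, norm_nonneg x]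
        have h2 : (1+‖u‖^2:ℝ) ^ (-τ) ≤ ((1/4:ℝ)*(1+‖x‖^2)) ^ (-τ) :=
          Real.rpow_le_rpow_of_nonpos (by positivity) h1 (by linarith)
        have h2' : ((1/4:ℝ)*(1+‖x‖^2)) ^ (-τ) = (4:ℝ) ^ τ * (1+‖x‖^2) ^ (-τ) := by
          rw [Real.mul_rpow (by norm_num) (by positivity)]
          congr 1
          rw [Real.rpow_neg (by norm_num), ← Real.inv_rpow (by norm_num)]
          norm_num
        have h3 : (1+‖x‖^2:ℝ) ^ (-τ) = (1+‖x‖^2)⁻¹ * (1+‖x‖^2) ^ (-(τ-1)) := by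
          rw [show (-τ) = (-(1:ℝ)) + (-(τ-1)) by ring, Real.rpow_add hx2, Real.rpow_neg_one]
        have h4 : (1+‖x‖^2:ℝ) ^ (-(τ-1)) ≤ min 1 (d ^ (-p)) := by
          refine le_min ?_ ?_
          · exact Real.rpow_le_one_of_one_le_of_nonpos (by nlinarith [sq_nonneg ‖x‖]) (by linarith)
          · have hda : d^2 ≤ 1+‖x‖^2 := by nlinarith
            calc (1+‖x‖^2:ℝ) ^ (-(τ-1)) ≤ (d^2 : ℝ) ^ (-(τ-1)) :=
                  Real.rpow_le_rpow_of_nonpos (by positivity) hda (by linarith)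
              _ = d ^ (-p) := by
                  rw [← Real.rpow_natCast d 2, ← Real.rpow_mul hdpos.le, hp]
                  norm_num
                  ring_nf
        have hB : (0:ℝ) ≤ d ^ (-(2:ℝ)) := Real.rpow_nonneg hdpos.le _
        have hfinal : d ^ (-(2:ℝ)) * (1+‖u‖^2) ^ (-τ) ≤
            (1+‖x‖^2)⁻¹ * ((4:ℝ) ^ τ * (d ^ (-(2:ℝ)) * min 1 (d ^ (-p)))) := by
          calc d ^ (-(2:ℝ)) * (1+‖u‖^2) ^ (-τ)
              ≤ d ^ (-(2:ℝ)) * ((4:ℝ) ^ τ * ((1+‖x‖^2)⁻¹ * (1+‖x‖^2) ^ (-(τ-1)))) := by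
                refine mul_le_mul_of_nonneg_left ?_ hB
                rw [← h3, ← h2']; exact h2
            _ ≤ d ^ (-(2:ℝ)) * ((4:ℝ) ^ τ * ((1+‖x‖^2)⁻¹ * min 1 (d ^ (-p)))) := by
                refine mul_le_mul_of_nonneg_left (mul_le_mul_of_nonneg_left
                  (mul_le_mul_of_nonneg_left h4 hinv0) (Real.rpow_nonneg (by norm_num) _)) hB
            _ = (1+‖x‖^2)⁻¹ * ((4:ℝ) ^ τ * (d ^ (-(2:ℝ)) * min 1 (d ^ (-p)))) := by ring
        exact le_trans (ENNReal.ofReal_le_ofReal hfinal) le_self_add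
      · push_neg at hcase
        have hxpos : (0:ℝ) < ‖x‖ := lt_trans zero_lt_one hx
        have h1 : d ^ (-(2:ℝ)) ≤ (‖x‖/2) ^ (-(2:ℝ)) :=
          Real.rpow_le_rpow_of_nonpos (by positivity) hcase.le (by norm_num)
        have h2 : ((‖x‖:ℝ)/2) ^ (-(2:ℝ)) = 4 * (‖x‖^2)⁻¹ := by
          rw [Real.div_rpow (norm_nonneg x) (by norm_num)]
          rw [show ((2:ℝ) ^ (-(2:ℝ))) = 1/4 by
            rw [Real.rpow_neg (by norm_num), show ((2:ℝ) ^ (2:ℝ)) = 4 by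
              rw [show ((2:ℝ):ℝ) = ((2:ℕ):ℝ) by norm_num, Real.rpow_natCast]; norm_num]
            norm_num]
          rw [show (‖x‖:ℝ) ^ (-(2:ℝ)) = (‖x‖^2)⁻¹ by
            rw [← Real.rpow_natCast ‖x‖ 2, ← Real.rpow_neg hxpos.le]; norm_num]
          ring
        have h3 : (4:ℝ) * (‖x‖^2)⁻¹ ≤ 8 * (1+‖x‖^2)⁻¹ := by
          have h12 : (1+‖x‖^2:ℝ) ≤ 2*‖x‖^2 := by nlinarith
          have h13 : ((2*‖x‖^2:ℝ))⁻¹ ≤ (1+‖x‖^2)⁻¹ := inv_anti₀ (by positivity) h12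
          have h14 : (‖x‖^2:ℝ)⁻¹ = 2 * (2*‖x‖^2)⁻¹ := by field_simp
          rw [h14]; linarith
        have hfinal : d ^ (-(2:ℝ)) * (1+‖u‖^2) ^ (-τ) ≤
            (1+‖x‖^2)⁻¹ * (8 * ((1+‖u‖^2) ^ (-τ))) := by
          calc d ^ (-(2:ℝ)) * (1+‖u‖^2) ^ (-τ) ≤ (8 * (1+‖x‖^2)⁻¹) * (1+‖u‖^2) ^ (-τ) := by
                refine mul_le_mul_of_nonneg_right ?_ (Real.rpow_nonneg ha.le _)
                calc d ^ (-(2:ℝ)) ≤ (‖x‖/2) ^ (-(2:ℝ)) := h1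
                  _ = 4 * (‖x‖^2)⁻¹ := h2
                  _ ≤ 8 * (1+‖x‖^2)⁻¹ := h3
            _ = (1+‖x‖^2)⁻¹ * (8 * ((1+‖u‖^2) ^ (-τ))) := by ring
        exact le_trans (ENNReal.ofReal_le_ofReal hfinal) le_add_self
    calc ∫⁻ u : E3, ENNReal.ofReal (‖x - u‖ ^ (-(2:ℝ)) * (1+‖u‖^2) ^ (-τ))
        ≤ ∫⁻ u : E3, (ENNReal.ofReal ((1+‖x‖^2)⁻¹ * ((4:ℝ) ^ τ * (‖x - u‖ ^ (-(2:ℝ)) * min 1 (‖x - u‖ ^ (-p)))))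
          + ENNReal.ofReal ((1+‖x‖^2)⁻¹ * (8 * ((1+‖u‖^2) ^ (-τ))))) := lintegral_mono hpt
      _ = (∫⁻ u : E3, ENNReal.ofReal ((1+‖x‖^2)⁻¹ * ((4:ℝ) ^ τ * (‖x - u‖ ^ (-(2:ℝ)) * min 1 (‖x - u‖ ^ (-p))))))
          + ∫⁻ u : E3, ENNReal.ofReal ((1+‖x‖^2)⁻¹ * (8 * ((1+‖u‖^2) ^ (-τ)))) := by
          refine lintegral_add_left ?_ _
          fun_prop
      _ ≤ ENNReal.ofReal ((1+‖x‖^2)⁻¹) * T := by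
          rw [hT, mul_add]
          gcongr
          · simp_rw [ENNReal.ofReal_mul hinv0,
              ENNReal.ofReal_mul (Real.rpow_nonneg (by norm_num : (0:ℝ) ≤ 4) τ)]
            rw [lintegral_const_mul' _ _ ENNReal.ofReal_ne_top,
              lintegral_const_mul' _ _ ENNReal.ofReal_ne_top]
            gcongr
            have hmp := (Measure.measurePreserving_sub_left (volume : Measure E3) x).lintegral_comp
              (phi_meas p)
            rw [hIφ, ← hmp]
          · simp_rw [ENNReal.ofReal_mul hinv0, ENNReal.ofReal_mul (by norm_num : (0:ℝ) ≤ 8)]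
            rw [lintegral_const_mul' _ _ ENNReal.ofReal_ne_top,
              lintegral_const_mul' _ _ ENNReal.ofReal_ne_top,
              show ENNReal.ofReal (8:ℝ) = 8 by norm_num]
      _ = ENNReal.ofReal ((1+‖x‖^2)⁻¹ * T.toReal) := by
          conv_lhs => rw [← ENNReal.ofReal_toReal hTlt.ne]
          rw [← ENNReal.ofReal_mul hinv0]
      _ ≤ ENNReal.ofReal (max (2 * S.toReal) T.toReal * (1+‖x‖^2)⁻¹) := by
          refine ENNReal.ofReal_le_ofReal ?_
          rw [mul_comm]
          exact mul_le_mul_of_nonneg_right (le_max_right _ _) hinv0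


lemma reduce (j : ℕ) (σ : ℝ) (x u : E3) :
    (‖u - x‖ - ‖x‖) ^ (2 * j) * ‖x - u‖ ^ (-(2 : ℝ)) * jap u ^ (-(2 : ℝ) * σ) ≤
      ‖x - u‖ ^ (-(2:ℝ)) * (1+‖u‖^2) ^ (-(σ - (j:ℝ))) := by
  have ha : (0:ℝ) < 1 + ‖u‖^2 := by positivity
  have hjap : jap u ^ (-(2:ℝ) * σ) = (1+‖u‖^2) ^ (-σ) := by
    rw [jap, Real.sqrt_eq_rpow, ← Real.rpow_mul ha.le,
      show (1/2:ℝ) * (-(2:ℝ) * σ) = -σ by ring]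
  rw [hjap]
  have hB : (0:ℝ) ≤ ‖x - u‖ ^ (-(2:ℝ)) := Real.rpow_nonneg (norm_nonneg _) _
  have hA : (‖u - x‖ - ‖x‖) ^ (2*j) ≤ (1+‖u‖^2) ^ j := by
    have h1 : |‖u - x‖ - ‖x‖| ≤ ‖u‖ := by
      have h := abs_norm_sub_norm_le (u - x) (-x)
      rw [norm_neg, sub_neg_eq_add, sub_add_cancel] at h
      exact h
    calc (‖u - x‖ - ‖x‖) ^ (2*j) = ((‖u - x‖ - ‖x‖)^2) ^ j := by rw [pow_mul]
      _ ≤ (1+‖u‖^2) ^ j := by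
          refine pow_le_pow_left₀ (sq_nonneg _) ?_ j
          nlinarith [abs_nonneg (‖u - x‖ - ‖x‖), sq_abs (‖u - x‖ - ‖x‖), norm_nonneg u,
            sq_nonneg (‖u - x‖ - ‖x‖)]
  have hsplit : (1+‖u‖^2:ℝ) ^ (-(σ - (j:ℝ))) = (1+‖u‖^2) ^ j * (1+‖u‖^2) ^ (-σ) := by
    rw [show -(σ - (j:ℝ)) = (j:ℝ) + (-σ) by ring, Real.rpow_add ha, Real.rpow_natCast]
  calc (‖u - x‖ - ‖x‖) ^ (2 * j) * ‖x - u‖ ^ (-(2 : ℝ)) * (1+‖u‖^2) ^ (-σ)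
      ≤ (1+‖u‖^2) ^ j * ‖x - u‖ ^ (-(2 : ℝ)) * (1+‖u‖^2) ^ (-σ) :=
        mul_le_mul_of_nonneg_right (mul_le_mul_of_nonneg_right hA hB)
          (Real.rpow_nonneg ha.le _)
    _ = ‖x - u‖ ^ (-(2:ℝ)) * (1+‖u‖^2) ^ (-(σ - (j:ℝ))) := by rw [hsplit]; ring

theorem stmt_10 (j : ℕ) :
    (∀ σ : ℝ, 1 / 2 + (j : ℝ) < σ → ∃ C : ℝ, ∀ x : E3,
      (∫⁻ u : E3, ENNReal.ofReal ((‖u - x‖ - ‖x‖) ^ (2 * j) *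
        ‖x - u‖ ^ (-(2 : ℝ)) * jap u ^ (-(2 : ℝ) * σ))) ≤ ENNReal.ofReal C) ∧
    (∀ σ : ℝ, 3 / 2 + (j : ℝ) < σ → ∃ C : ℝ, ∀ x : E3,
      (∫⁻ u : E3, ENNReal.ofReal ((‖u - x‖ - ‖x‖) ^ (2 * j) *
        ‖x - u‖ ^ (-(2 : ℝ)) * jap u ^ (-(2 : ℝ) * σ)))
        ≤ ENNReal.ofReal (C * jap x ^ (-(2 : ℝ)))) := by
  constructor
  · intro σ hσ
    obtain ⟨S, hS, hSx⟩ := key_A (τ := σ - (j:ℝ)) (by linarith)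
    refine ⟨S.toReal, fun x => ?_⟩
    calc ∫⁻ u : E3, ENNReal.ofReal ((‖u - x‖ - ‖x‖) ^ (2 * j) *
          ‖x - u‖ ^ (-(2 : ℝ)) * jap u ^ (-(2 : ℝ) * σ))
        ≤ ∫⁻ u : E3, ENNReal.ofReal (‖x - u‖ ^ (-(2:ℝ)) * (1+‖u‖^2) ^ (-(σ - (j:ℝ)))) :=
          lintegral_mono fun u => ENNReal.ofReal_le_ofReal (reduce j σ x u)
      _ ≤ S := hSx x
      _ = ENNReal.ofReal S.toReal := (ENNReal.ofReal_toReal hS).symm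
  · intro σ hσ
    obtain ⟨C, hCx⟩ := key_B (τ := σ - (j:ℝ)) (by linarith)
    refine ⟨C, fun x => ?_⟩
    have hx2 : (0:ℝ) < 1 + ‖x‖^2 := by positivity
    have hj : jap x ^ (-(2:ℝ)) = (1+‖x‖^2)⁻¹ := by
      rw [jap, Real.sqrt_eq_rpow, ← Real.rpow_mul hx2.le,
        show (1/2:ℝ) * (-(2:ℝ)) = -1 by ring, Real.rpow_neg_one]
    rw [hj]
    calc ∫⁻ u : E3, ENNReal.ofReal ((‖u - x‖ - ‖x‖) ^ (2 * j) *
          ‖x - u‖ ^ (-(2 : ℝ)) * jap u ^ (-(2 : ℝ) * σ))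
        ≤ ∫⁻ u : E3, ENNReal.ofReal (‖x - u‖ ^ (-(2:ℝ)) * (1+‖u‖^2) ^ (-(σ - (j:ℝ)))) :=
          lintegral_mono fun u => ENNReal.ofReal_le_ofReal (reduce j σ x u)
      _ ≤ ENNReal.ofReal (C * (1+‖x‖^2)⁻¹) := hCx x
end
end
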